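/- arXiv:1610.07938 — 7 statements merged into one kernel-verified Lean document; each statement's English description precedes it below -/
import Mathlib

section
/- Let F be a field of characteristic 2 and let B be a k×k matrix over F whose characteristic polynomial is irreducible over F. If D is a k×k matrix with D² = I_k and DB = BD, then D = I_k. -/
/-!
In characteristic 2 the relation `D * D = 1` says that `N = D - 1` squares to zero, and `N`
commutes with `B`, so `ker N` is a `B`-invariant subspace. When the characteristic polynomial
`χ` of `B` is irreducible, it is the minimal polynomial of `B`, and `B` has no invariant subspaces
besides `0` and the whole space: the minimal polynomial of `B` restricted to an invariant `W ≠ 0`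
divides `χ`, hence equals `χ`, while its degree is at most `dim W`. So either `N = 0`, or `N` is
injective, which for a nilpotent endomorphism again forces `N = 0`.
-/

open Polynomial

namespace Module.End

variable {K V : Type*} [Field K] [AddCommGroup V] [Module K V]

theorem aeval_restrict_apply {f : End K V} {W : Submodule K V} (h : ∀ x ∈ W, f x ∈ W)
    (q : K[X]) (x : W) : (aeval (f.restrict h) q x : V) = aeval f q x := by
  induction q using Polynomial.induction_on' with
  | add p q hp hq => simp [hp, hq]
  | monomial n a => simp [pow_restrict n h, LinearMap.restrict_apply]

theorem minpoly_restrict_dvd {f : End K V} {W : Submodule K V}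
    (h : ∀ x ∈ W, f x ∈ W) : minpoly K (f.restrict h) ∣ minpoly K f :=
  minpoly.dvd K _ <| LinearMap.ext fun x ↦ Subtype.ext <| by
    simp [aeval_restrict_apply]

theorem minpoly_eq_charpoly_of_irreducible [FiniteDimensional K V] {f : End K V}
    (hf : Irreducible f.charpoly) : minpoly K f = f.charpoly := by
  have : Nontrivial V := by
    refine Module.nontrivial_of_finrank_pos (R := K) ?_
    rw [← LinearMap.charpoly_natDegree f]
    exact natDegree_pos_of_not_isUnit_of_dvd_monic (LinearMap.charpoly_monic f) hf.not_isUnit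
      dvd_rfl
  exact (minpoly.eq_of_irreducible_of_monic hf (LinearMap.aeval_self_charpoly f)
    (LinearMap.charpoly_monic f)).symm

theorem eq_bot_or_eq_top_of_irreducible_charpoly [FiniteDimensional K V] {f : End K V}
    (hf : Irreducible f.charpoly) {W : Submodule K V} (hW : W ∈ f.invtSubmodule) :
    W = ⊥ ∨ W = ⊤ := by
  rw [or_iff_not_imp_left, ← ne_eq, ← Submodule.nontrivial_iff_ne_bot]
  intro hWnt
  have hdvd := minpoly_restrict_dvd hW
  rw [minpoly_eq_charpoly_of_irreducible hf, hf.dvd_iff] at hdvd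
  have hmin : f.charpoly = minpoly K (f.restrict hW) :=
    eq_of_monic_of_associated (LinearMap.charpoly_monic f)
      (minpoly.monic (Algebra.IsIntegral.isIntegral _)) (hdvd.resolve_left (minpoly.not_isUnit K _))
  apply Submodule.eq_top_of_finrank_eq (le_antisymm (Submodule.finrank_le W) ?_)
  calc Module.finrank K V = f.charpoly.natDegree := (LinearMap.charpoly_natDegree f).symm
    _ = (minpoly K (f.restrict hW)).natDegree := by rw [hmin]
    _ ≤ (f.restrict hW).charpoly.natDegree :=
      natDegree_le_of_dvd (LinearMap.minpoly_dvd_charpoly _) (LinearMap.charpoly_monic _).ne_zero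
    _ = Module.finrank K W := LinearMap.charpoly_natDegree _

theorem ker_mem_invtSubmodule_of_commute {R M : Type*} [Ring R] [AddCommGroup M] [Module R M]
    {f g : End R M} (hfg : Commute f g) : LinearMap.ker g ∈ f.invtSubmodule := fun x hx ↦ by
  simp only [Submodule.mem_comap, LinearMap.mem_ker] at hx ⊢
  rw [← mul_apply, ← hfg.eq, mul_apply, hx, map_zero]

theorem eq_zero_of_isNilpotent_of_commute [FiniteDimensional K V] {f g : End K V}
    (hf : Irreducible f.charpoly) (hfg : Commute f g) (hg : IsNilpotent g) : g = 0 := by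
  rcases eq_bot_or_eq_top_of_irreducible_charpoly hf (ker_mem_invtSubmodule_of_commute hfg)
    with h | h
  · by_contra hne
    have : Nontrivial (End K V) := ⟨⟨g, 0, hne⟩⟩
    exact hg.not_isUnit ((LinearMap.isUnit_iff_ker_eq_bot g).mpr h)
  · exact LinearMap.ker_eq_top.mp h

end Module.End

theorem isNilpotent_sub_one_of_mul_self_eq_one {R : Type*} [Ring R] (h2 : (2 : R) = 0) {a : R}
    (ha : a * a = 1) : IsNilpotent (a - 1) :=
  ⟨2, calc (a - 1) ^ 2 = (a * a - 1) + 2 * (1 - a) := by noncomm_ring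
    _ = 0 := by rw [ha, h2, sub_self, zero_mul, add_zero]⟩

theorem stmt_11 {F : Type*} [Field F] (hF : ringChar F = 2) {k : ℕ}
    (B : Matrix (Fin k) (Fin k) F) (hB : Irreducible B.charpoly)
    (D : Matrix (Fin k) (Fin k) F) (hD : D * D = 1) (hDB : D * B = B * D) :
    D = 1 := by
  have : CharP F 2 := ringChar.of_eq hF
  have h2 : (2 : Matrix (Fin k) (Fin k) F) = 0 := by
    rw [← map_ofNat (algebraMap F (Matrix (Fin k) (Fin k) F)) 2, CharP.ofNat_eq_zero, map_zero]
  let e := Matrix.toLinAlgEquiv' (R := F) (n := Fin k)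
  have hnil : IsNilpotent (e (D - 1)) := (isNilpotent_sub_one_of_mul_self_eq_one h2 hD).map e
  have hcomm : Commute (e B) (e (D - 1)) :=
    ((Commute.symm hDB).sub_right (Commute.one_right B)).map e
  have hirr : Irreducible (e B).charpoly := (Matrix.charpoly_toLin' B).symm ▸ hB
  rw [← sub_eq_zero, ← e.map_eq_zero_iff]
  exact Module.End.eq_zero_of_isNilpotent_of_commute hirr hcomm hnil
end

section
/- Let F be a field of characteristic different from 2, let N be the k×k matrix with ones on the subdiagonal (N_{i+1,i} = 1) and zeros elsewhere, and set A = N - 2·I_k. If D is a k×k matrix with D² = I_k and DA = AD, then D = I_k or D = -I_k. -/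
theorem stmt_12 {F : Type*} [Field F] (hF : ringChar F ≠ 2) {k : ℕ}
    (D : Matrix (Fin k) (Fin k) F) (hD : D * D = 1)
    (hDA : D * (Matrix.of (fun i j : Fin k => if (i : ℕ) = (j : ℕ) + 1 then (1 : F) else 0)
          - 2 • (1 : Matrix (Fin k) (Fin k) F)) =
        (Matrix.of (fun i j : Fin k => if (i : ℕ) = (j : ℕ) + 1 then (1 : F) else 0)
          - 2 • (1 : Matrix (Fin k) (Fin k) F)) * D) :
    D = 1 ∨ D = -1 := by
  rcases Nat.eq_zero_or_pos k with hk | hk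
  · left; ext i j; exact absurd i.2 (by omega)
  set N : Matrix (Fin k) (Fin k) F :=
    Matrix.of (fun i j : Fin k => if (i : ℕ) = (j : ℕ) + 1 then (1 : F) else 0) with hN
  have h2 : (2 : F) ≠ 0 := Ring.two_ne_zero hF
  have hN' : ∀ a b : Fin k, N a b = if (a : ℕ) = (b : ℕ) + 1 then 1 else 0 :=
    fun a b => rfl
  have hC : D * N = N * D := by
    rw [mul_sub, sub_mul] at hDA
    have h2' : D * (2 • (1 : Matrix (Fin k) (Fin k) F)) = (2 • 1) * D := by
      rw [mul_smul_comm, smul_mul_assoc, mul_one, one_mul]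
    rw [h2'] at hDA
    exact sub_left_inj.mp hDA
  have key : ∀ i j : Fin k, (if h : (j : ℕ) + 1 < k then D i ⟨(j : ℕ) + 1, h⟩ else 0)
      = (if _ : 0 < (i : ℕ) then D ⟨(i : ℕ) - 1, by omega⟩ j else 0) := by
    intro i j
    have h1 := congrFun (congrFun hC i) j
    rw [Matrix.mul_apply, Matrix.mul_apply] at h1
    have hL : ∑ l, D i l * N l j = if h : (j : ℕ) + 1 < k then D i ⟨(j : ℕ) + 1, h⟩ else 0 := by
      split_ifs with h
      · rw [Finset.sum_eq_single (⟨(j : ℕ) + 1, h⟩ : Fin k)]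
        · rw [hN', if_pos rfl, mul_one]
        · intro b _ hb
          have hne : (b : ℕ) ≠ (j : ℕ) + 1 := fun hb' => hb (Fin.ext hb')
          rw [hN', if_neg hne, mul_zero]
        · intro h'; exact absurd (Finset.mem_univ _) h'
      · apply Finset.sum_eq_zero; intro l _
        have hl := l.2
        have hne : (l : ℕ) ≠ (j : ℕ) + 1 := by omega
        rw [hN', if_neg hne, mul_zero]
    have hR : ∑ l, N i l * D l j
        = if _ : 0 < (i : ℕ) then D ⟨(i : ℕ) - 1, by omega⟩ j else 0 := by
      split_ifs with h
      · rw [Finset.sum_eq_single (⟨(i : ℕ) - 1, by omega⟩ : Fin k)]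
        · rw [hN', if_pos (by dsimp only; omega), one_mul]
        · intro b _ hb
          have hb' : (i : ℕ) ≠ (b : ℕ) + 1 := by
            intro hc
            exact hb (Fin.ext (by dsimp only; omega))
          rw [hN', if_neg hb', zero_mul]
        · intro h'; exact absurd (Finset.mem_univ _) h'
      · apply Finset.sum_eq_zero; intro l _
        have hne : (i : ℕ) ≠ (l : ℕ) + 1 := by omega
        rw [hN', if_neg hne, zero_mul]
    rw [hL, hR] at h1
    exact h1
  have step : ∀ (i j : Fin k) (hi : (i : ℕ) + 1 < k) (hj : (j : ℕ) + 1 < k),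
      D ⟨(i : ℕ) + 1, hi⟩ ⟨(j : ℕ) + 1, hj⟩ = D i j := by
    intro i j hi hj
    have h := key ⟨(i : ℕ) + 1, hi⟩ j
    rw [dif_pos hj, dif_pos (by dsimp only; omega)] at h
    rw [h]
    congr 1
  have zrow : ∀ (j : Fin k) (hj : (j : ℕ) + 1 < k), D ⟨0, hk⟩ ⟨(j : ℕ) + 1, hj⟩ = 0 := by
    intro j hj
    have h := key ⟨0, hk⟩ j
    rw [dif_pos hj, dif_neg (by dsimp only; omega)] at h
    exact h
  have shift : ∀ (m : ℕ) (i j : Fin k) (hmi : m ≤ (i : ℕ)) (hmj : m ≤ (j : ℕ)),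
      D i j = D ⟨(i : ℕ) - m, by have := i.2; omega⟩ ⟨(j : ℕ) - m, by have := j.2; omega⟩ := by
    intro m
    induction m with
    | zero => intro i j _ _; congr 1 <;> exact (Fin.ext (by dsimp only; omega)).symm
    | succ n ih =>
      intro i j hmi hmj
      have hik := i.2
      have hjk := j.2
      have hi1 : ((i : ℕ) - 1) + 1 < k := by omega
      have hj1 : ((j : ℕ) - 1) + 1 < k := by omega
      have h1 : D i j = D ⟨(i : ℕ) - 1, by omega⟩ ⟨(j : ℕ) - 1, by omega⟩ := by
        have hs := step ⟨(i : ℕ) - 1, by omega⟩ ⟨(j : ℕ) - 1, by omega⟩ hi1 hj1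
        rw [← hs]
        congr 1 <;> exact Fin.ext (by dsimp only; omega)
      rw [h1, ih ⟨(i : ℕ) - 1, by omega⟩ ⟨(j : ℕ) - 1, by omega⟩
        (by dsimp only; omega) (by dsimp only; omega)]
      congr 1 <;> exact Fin.ext (by dsimp only; omega)
  set d : ℕ → F := fun m => if h : m < k then D ⟨m, h⟩ ⟨0, hk⟩ else 0 with hd
  have hdval : ∀ (m : ℕ) (h : m < k), d m = D ⟨m, h⟩ ⟨0, hk⟩ := by
    intro m h
    simp only [hd]
    rw [dif_pos h]
  have main : ∀ i j : Fin k, D i j = if (j : ℕ) ≤ (i : ℕ) then d ((i : ℕ) - (j : ℕ)) else 0 := by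
    intro i j
    have hik := i.2
    have hjk := j.2
    split_ifs with h
    · rw [shift (j : ℕ) i j h le_rfl, hdval ((i : ℕ) - (j : ℕ)) (by omega)]
      congr 1
      exact Fin.ext (by dsimp only; omega)
    · rw [shift (i : ℕ) i j le_rfl (by omega)]
      have hjk' : ((j : ℕ) - (i : ℕ) - 1) + 1 < k := by omega
      have hz := zrow ⟨(j : ℕ) - (i : ℕ) - 1, by omega⟩ hjk'
      rw [← hz]
      congr 1 <;> exact Fin.ext (by dsimp only; omega)
  have hdiag : ∀ i : Fin k, D i i = d 0 := by
    intro i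
    rw [main, if_pos le_rfl, Nat.sub_self]
  have hcol : ∀ (m : ℕ) (h : m < k), D ⟨m, h⟩ ⟨0, hk⟩ = d m := fun m h => (hdval m h).symm
  have hd0 : d 0 * d 0 = 1 := by
    have h1 := congrFun (congrFun hD ⟨0, hk⟩) ⟨0, hk⟩
    rw [Matrix.mul_apply] at h1
    have hsum : ∑ l, D ⟨0, hk⟩ l * D l ⟨0, hk⟩ = d 0 * d 0 := by
      rw [Finset.sum_eq_single (⟨0, hk⟩ : Fin k)]
      · rw [hdiag]
      · intro b _ hb
        have hb' : 0 < (b : ℕ) := by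
          rcases Nat.eq_zero_or_pos (b : ℕ) with h | h
          · exact absurd (Fin.ext (by dsimp only; omega)) hb
          · exact h
        rw [main, if_neg (by dsimp only; omega)]
        ring
      · simp
    rw [hsum] at h1
    rw [h1, Matrix.one_apply_eq]
  have hd0ne : d 0 ≠ 0 := fun h => by simp [h] at hd0
  have hdm : ∀ m, 1 ≤ m → m < k → d m = 0 := by
    intro m
    induction m using Nat.strong_induction_on with
    | _ m ih =>
      intro hm1 hmk
      have h1 := congrFun (congrFun hD ⟨m, hmk⟩) ⟨0, hk⟩
      rw [Matrix.mul_apply] at h1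
      have hoff : (1 : Matrix (Fin k) (Fin k) F) ⟨m, hmk⟩ ⟨0, hk⟩ = 0 := by
        rw [Matrix.one_apply_ne]
        intro hc
        have := congrArg Fin.val hc
        dsimp only at this
        omega
      rw [hoff] at h1
      have hne : (⟨0, hk⟩ : Fin k) ≠ ⟨m, hmk⟩ := by
        intro hc
        have := congrArg Fin.val hc
        dsimp only at this
        omega
      have hsum : ∑ l, D ⟨m, hmk⟩ l * D l ⟨0, hk⟩ = d m * d 0 + d 0 * d m := by
        rw [← Finset.sum_subset (Finset.subset_univ ({⟨0, hk⟩, ⟨m, hmk⟩} : Finset (Fin k)))]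
        · simp only [Finset.sum_pair hne, hcol, hdiag]
        · intro l _ hl
          simp only [Finset.mem_insert, Finset.mem_singleton] at hl
          push_neg at hl
          obtain ⟨hl0, hlm⟩ := hl
          have hlk := l.2
          have hl0' : 0 < (l : ℕ) := by
            rcases Nat.eq_zero_or_pos (l : ℕ) with h | h
            · exact absurd (Fin.ext (by dsimp only; omega)) hl0
            · exact h
          have hlm' : (l : ℕ) ≠ m := by
            intro hc
            exact hlm (Fin.ext (by dsimp only; omega))
          rw [main ⟨m, hmk⟩ l]
          rcases lt_or_ge m (l : ℕ) with h | h
          · rw [if_neg (by dsimp only; omega)]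
            ring
          · rw [if_pos (by dsimp only; omega), hcol l.1 l.2]
            have hdl : d (l : ℕ) = 0 := ih (l : ℕ) (by omega) hl0' l.2
            rw [hdl]
            ring
      rw [hsum] at h1
      have h3 : (2 : F) * (d 0 * d m) = 0 := by linear_combination h1
      rcases mul_eq_zero.mp h3 with h | h
      · exact absurd h h2
      · rcases mul_eq_zero.mp h with h | h
        · exact absurd h hd0ne
        · exact h
  have hfinal : D = d 0 • (1 : Matrix (Fin k) (Fin k) F) := by
    ext i j
    rw [main, Matrix.smul_apply]
    rcases lt_trichotomy (i : ℕ) (j : ℕ) with h | h | h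
    · rw [if_neg (by omega), Matrix.one_apply_ne (fun hc => by
        have := congrArg Fin.val hc; omega)]
      simp
    · rw [if_pos (by omega)]
      have : i = j := Fin.ext h
      subst this
      rw [Nat.sub_self, Matrix.one_apply_eq, smul_eq_mul, mul_one]
    · rw [if_pos (by omega), hdm _ (by omega) (by have := i.2; omega),
        Matrix.one_apply_ne (fun hc => by have := congrArg Fin.val hc; omega)]
      simp
  rcases mul_self_eq_one_iff.mp hd0 with h | h
  · left; rw [hfinal, h, one_smul]
  · right; rw [hfinal, h]; simp
end

section
/- Let F be a field of characteristic 2, let B ∈ GL_k(F) be such that the only involution commuting with B is the identity (i.e. D² = I_k and DB = BD imply D = I_k). Set t = [[I_k, 0],[I_k, I_k]] and x = [[I_k, B],[0, I_k]] in GL_{2k}(F). Then the only y ∈ GL_{2k}(F) with y² = 1 that commutes with both t and x is y = I_{2k}. In particular the distance between t and x in the commuting involution graph is at least 3. -/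
theorem stmt_13 {F : Type*} [Field F] (hF : ringChar F = 2) {k : ℕ}
    (B : Matrix (Fin k) (Fin k) F) (hB : IsUnit B)
    (hBinv : ∀ D : Matrix (Fin k) (Fin k) F, D * D = 1 → D * B = B * D → D = 1) :
    ∀ y : Matrix (Fin k ⊕ Fin k) (Fin k ⊕ Fin k) F, y * y = 1 →
      y * Matrix.fromBlocks (1 : Matrix (Fin k) (Fin k) F) 0 1 1 =
        Matrix.fromBlocks (1 : Matrix (Fin k) (Fin k) F) 0 1 1 * y →
      y * Matrix.fromBlocks (1 : Matrix (Fin k) (Fin k) F) B 0 1 =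
        Matrix.fromBlocks (1 : Matrix (Fin k) (Fin k) F) B 0 1 * y →
      y = 1 := by
  intro y hy ht hx
  set a := y.toBlocks₁₁ with ha
  set b := y.toBlocks₁₂ with hb
  set c := y.toBlocks₂₁ with hc
  set d := y.toBlocks₂₂ with hd
  have hyb : y = Matrix.fromBlocks a b c d := (Matrix.fromBlocks_toBlocks y).symm
  rw [hyb] at ht hx hy ⊢
  simp only [Matrix.fromBlocks_multiply] at ht hx hy
  -- extract block equations from ht
  have ht11 := congrArg Matrix.toBlocks₁₁ ht
  have ht21 := congrArg Matrix.toBlocks₂₁ ht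
  simp only [Matrix.toBlocks_fromBlocks₁₁, Matrix.toBlocks_fromBlocks₂₁] at ht11 ht21
  have hb0 : b = 0 := by
    have : a * 1 + b * 1 = 1 * a + 0 * c := ht11
    simp only [mul_one, one_mul, Matrix.zero_mul, add_zero] at this
    have h' : a + b = a + 0 := by simpa using this
    exact add_left_cancel h'
  have hda : d = a := by
    have : c * 1 + d * 1 = 1 * a + 1 * c := ht21
    simp only [mul_one, one_mul] at this
    rw [add_comm a c] at this
    exact add_left_cancel this
  have hx11 := congrArg Matrix.toBlocks₁₁ hx
  have hx12 := congrArg Matrix.toBlocks₁₂ hx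
  simp only [Matrix.toBlocks_fromBlocks₁₁, Matrix.toBlocks_fromBlocks₁₂] at hx11 hx12
  have hc0 : c = 0 := by
    have h1 : a * 1 + b * 0 = 1 * a + B * c := hx11
    simp only [mul_one, one_mul, Matrix.mul_zero, add_zero] at h1
    have hBc : B * c = 0 := by
      have := add_left_cancel (a := a) (b := B * c) (c := 0) (by simpa using h1.symm)
      simpa using this
    obtain ⟨u, hu⟩ := hB
    have hinv : (↑u⁻¹ : Matrix (Fin k) (Fin k) F) * B = 1 := by
      rw [← hu]; exact u.inv_mul
    calc c = ((↑u⁻¹ : Matrix (Fin k) (Fin k) F) * B) * c := by rw [hinv, Matrix.one_mul]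
      _ = (↑u⁻¹ : Matrix (Fin k) (Fin k) F) * (B * c) := by rw [Matrix.mul_assoc]
      _ = 0 := by rw [hBc, Matrix.mul_zero]
  have hcomm : a * B = B * a := by
    have h2 : a * B + b * 1 = 1 * b + B * d := hx12
    rw [hb0, hda] at h2
    simpa using h2
  have hsq : a * a = 1 := by
    rw [← Matrix.fromBlocks_one] at hy
    have h3 := congrArg Matrix.toBlocks₁₁ hy
    simp only [Matrix.toBlocks_fromBlocks₁₁] at h3
    rw [hb0, hc0] at h3
    simpa using h3
  have ha1 : a = 1 := hBinv a hsq hcomm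
  rw [hb0, hc0, hda, ha1, Matrix.fromBlocks_one]
end

section
/- Let F be a field of characteristic 2, let k be odd, n = 2k, and t = J(n,k) = [[I_k, 0],[I_k, I_k]] ∈ GL_n(F). Then there do not exist x, y ∈ GL_n(F) with x² = y² = 1, rank(x - 1) = rank(y - 1) = k, such that x commutes with t, y commutes with tᵀ, and x commutes with y. Consequently the distance between t and tᵀ in the commuting involution graph Γ(GL_n(F), X_k) is at least 4. -/
section RingIdentities

variable {R : Type*} [Ring R]

-- single letter-set identities (a, n, m)
lemma s14_I1 (a n m : R) (h2 : (2:R) = 0) (han : a*n = n*a) (hnm : n*m + m*n = 1) :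
    (a*m + m*a)*n = n*(a*m + m*a) := by
  linear_combination (norm := noncomm_ring) a * hnm + han * m + m * han + hnm * a
    - n*m*a * h2 - a*n*m * h2 + a * h2

lemma s14_I2 (a n m : R) (h2 : (2:R) = 0) (hmm : m*m = 0) :
    (a*m + m*a)*m = m*(a*m + m*a) := by
  linear_combination (norm := noncomm_ring) a * hmm + hmm * a - m*m*a * h2

lemma s14_I3 (a n m : R) (h2 : (2:R) = 0) (haa : a*a = 0) :
    (a*m + m*a)*a = a*(a*m + m*a) := by
  linear_combination (norm := noncomm_ring) m * haa + haa * m - a*a*m * h2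

lemma s14_I10 (a n m : R) (h2 : (2:R) = 0) (han : a*n = n*a) (hnm : n*m + m*n = 1) :
    (a + n*(a*m + m*a))*n = n*(a + n*(a*m + m*a)) := by
  linear_combination (norm := noncomm_ring) han + n * (s14_I1 a n m h2 han hnm)

lemma s14_I11 (a n m : R) (h2 : (2:R) = 0) (han : a*n = n*a) (hnm : n*m + m*n = 1)
    (hmm : m*m = 0) :
    (a + n*(a*m + m*a))*m = m*(a + n*(a*m + m*a)) := by
  linear_combination (norm := noncomm_ring) a * hmm * n + a*m * hnm + a * hnm * m + han * (m*m)
    + hnm * (a*m) + m * hnm * a + hmm * (a*n) + m*m * han + 2 * (a*m) * h2 + n*a*m*m * h2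
    - m*n*a*m * h2 - m*n*m*a * h2 - a*m*m*n * h2 - a*m*n*m * h2 - a*n*m*m * h2 - m*m*a*n * h2

lemma s14_I17 (a n m : R) (h2 : (2:R) = 0) (han : a*n = n*a) (hnm : n*m + m*n = 1)
    (hnn : n*n = 0) :
    n*(a*m + m*a)*n = 0 := by
  linear_combination (norm := noncomm_ring) n * (s14_I1 a n m h2 han hnm) + hnn * (a*m) + hnn * (m*a)

lemma s14_I16 (a n m : R) (h2 : (2:R) = 0) (haa : a*a = 0) (han : a*n = n*a)
    (hnm : n*m + m*n = 1) (hnn : n*n = 0) :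
    (a + n*(a*m + m*a))*(a + n*(a*m + m*a)) = 0 := by
  have hI17 := s14_I17 a n m h2 han hnm hnn
  linear_combination (norm := noncomm_ring) haa + han * (a*m) + n * haa * m + han * (m*a)
    + hI17 * (a*m) + hI17 * (m*a) + n*m * haa + n*a*m*a * h2

lemma s14_I20a (n m : R) (h2 : (2:R) = 0) (hnm : n*m + m*n = 1) (hnn : n*n = 0) :
    n*m*n = n := by
  linear_combination (norm := noncomm_ring) hnn * m + n * hnm - n*n*m * h2

end RingIdentities

section RingIdentities2

variable {R : Type*} [Ring R]

lemma s14_I14 (a n m : R) (h2 : (2:R) = 0) (haa : a*a = 0) (han : a*n = n*a)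
    (hnm : n*m + m*n = 1) :
    (a*m + m*a)*(a + n*(a*m + m*a)) = (a + n*(a*m + m*a))*(a*m + m*a) := by
  have hI1 := s14_I1 a n m h2 han hnm
  have hI3 := s14_I3 a n m h2 haa
  linear_combination (norm := noncomm_ring) hI1 * (a*m) + hI1 * (m*a) + hI3

lemma s14_I4 (a c n m : R) (h2 : (2:R) = 0) (hcm : c*m = m*c) (hac : a*c = c*a) :
    (a*m + m*a)*c = c*(a*m + m*a) := by
  linear_combination (norm := noncomm_ring) m * hac + hac * m + a * hcm + hcm * a
    + a*m*c * h2 - c*m*a * h2 + m*c*a * h2 - a*c*m * h2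

lemma s14_I8 (a c n m : R) (h2 : (2:R) = 0) (hac : a*c = c*a) (han : a*n = n*a) :
    (c*n + n*c)*a = a*(c*n + n*c) := by
  linear_combination (norm := noncomm_ring) hac * n + han * c + n * hac + c * han
    + c*n*a * h2 + n*c*a * h2 - a*c*n * h2 - a*n*c * h2

lemma s14_I9 (a c n m : R) (h2 : (2:R) = 0) (han : a*n = n*a) (hnm : n*m + m*n = 1)
    (hcm : c*m = m*c) (hac : a*c = c*a) :
    (a*m + m*a)*(c*n + n*c) = (c*n + n*c)*(a*m + m*a) := by
  have hI1 := s14_I1 a n m h2 han hnm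
  have hI4 := s14_I4 a c n m h2 hcm hac
  linear_combination (norm := noncomm_ring) hI4 * n + c * hI1 + hI1 * c + n * hI4

lemma s14_I15 (a c n m : R) (h2 : (2:R) = 0) (han : a*n = n*a) (hnm : n*m + m*n = 1)
    (hmm : m*m = 0) (hcm : c*m = m*c) (hac : a*c = c*a) :
    (a*m + m*a)*(c + m*(c*n + n*c)) = (c + m*(c*n + n*c))*(a*m + m*a) := by
  have hI2 := s14_I2 a n m h2 hmm
  have hI4 := s14_I4 a c n m h2 hcm hac
  have hI9 := s14_I9 a c n m h2 han hnm hcm hac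
  linear_combination (norm := noncomm_ring) hI4 + hI2 * (c*n) + hI2 * (n*c) + m * hI9

lemma s14_I19 (a c n m : R) (h2 : (2:R) = 0) (haa : a*a = 0) (hcc : c*c = 0)
    (hnn : n*n = 0) (hmm : m*m = 0) (han : a*n = n*a) (hcm : c*m = m*c) (hac : a*c = c*a)
    (hnm : n*m + m*n = 1) :
    (a + n*(a*m + m*a))*(c + m*(c*n + n*c)) + (c + m*(c*n + n*c))*(a + n*(a*m + m*a))
      = (a*m + m*a)*(c*n + n*c) := by
  have hI2 := s14_I2 a n m h2 hmm
  have hI4 := s14_I4 a c n m h2 hcm hac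
  have hI5 := s14_I2 c m n h2 hnn
  have hI8 := s14_I8 a c n m h2 hac han
  have hI9 := s14_I9 a c n m h2 han hnm hcm hac
  linear_combination (norm := noncomm_ring) n * hI2 * (c*n) + n * hI2 * (n*c) + n*m * hI9
    + m * hI8 + m * hI5 * (a*m) + m * hI5 * (m*a) + hnm * (c*n*m*a) + hnm * (n*c*m*a)
    + n * hI4 + n*m * hI8 * m + m*n * hI8 * m + hI8 * m + hnm * (a*n*c*m) + hnm * (a*c*n*m)
    + hac + c*a * h2 + c*n*m*a * h2 + n*c*m*a * h2 + a*c*n*m * h2 + a*n*c*m * h2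

end RingIdentities2

section EIdentities

variable {R : Type*} [Ring R]

lemma s14_E1 (a u d n m : R) (h2 : (2:R) = 0) (hA : a = u + n*d) (hun : u*n = n*u) (hum : u*m = m*u)
    (hdn : d*n = n*d) (hdm : d*m = m*d) (hnmn : n*m*n = n) :
    a*(m*n) = m*n*u + n*d := by
  linear_combination (norm := noncomm_ring) hA * m*n + hum * n + n * hdm * n + m * hun
    + n*m * hdn + hnmn * d

lemma s14_E2 (a u d n m : R) (h2 : (2:R) = 0) (hA : a = u + n*d) (hun : u*n = n*u) (hndn : n*d*n = 0) :
    a*n = n*u := by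
  linear_combination (norm := noncomm_ring) hA * n + hun + hndn

lemma s14_E3 (a u d n m : R) (h2 : (2:R) = 0) (hA : a = u + n*d) (hun : u*n = n*u) (hum : u*m = m*u)
    (hnn : n*n = 0) :
    m*n*a = u*(m*n) := by
  linear_combination (norm := noncomm_ring) m*n * hA + hum * n + m * hun + m * hnn * d
    - u*m*n * h2 + m*n*u * h2

lemma s14_E4 (a u d n m : R) (hnmn : n*m*n = n) : (m*n)*(m*n) = m*n := by
  linear_combination (norm := noncomm_ring) m * hnmn

lemma s14_E5 (a u d n m : R) (hnn : n*n = 0) : (m*n)*n = 0 := by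
  linear_combination (norm := noncomm_ring) m * hnn

lemma s14_E6 (a u d n m : R) (hA : a = u + n*d) (hum : u*m = m*u) (hdm : d*m = m*d) :
    a*m = m*u + n*m*d := by
  linear_combination (norm := noncomm_ring) hA * m + hum + n * hdm

lemma s14_E7 (a u d n m : R) (hA : a = u + n*d) (hun : u*n = n*u) (hum : u*m = m*u) (hndn : n*d*n = 0) :
    a*(n*m) = n*m*u := by
  linear_combination (norm := noncomm_ring) hA * n*m + hun * m + hndn * m + n * hum

lemma s14_E8 (a u d n m : R) (hnn : n*n = 0) : n*(n*m) = 0 := by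
  linear_combination (norm := noncomm_ring) hnn * m

lemma s14_E9 (a u d n m : R) (h2 : (2:R) = 0) (hA : a = u + n*d) (hun : u*n = n*u) (hnn : n*n = 0) :
    n*a = u*n := by
  linear_combination (norm := noncomm_ring) n * hA + hun + hnn * d - u*n * h2 + n*u * h2

end EIdentities

section Key

open LinearMap Submodule

lemma s14_key {F V : Type*} [Field F] [AddCommGroup V] [Module F V]
    (a u d n m : Module.End F V)
    (hV2 : ∀ v : V, v + v = 0)
    (hker : LinearMap.ker a = LinearMap.range a)
    (hnm : n * m + m * n = 1)
    (e1 : a * (m * n) = m * n * u + n * d) (e2 : a * n = n * u)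
    (e3 : m * n * a = u * (m * n)) (e4 : (m * n) * (m * n) = m * n)
    (e5 : (m * n) * n = 0) (e6 : a * m = m * u + n * m * d)
    (e7 : a * (n * m) = n * m * u) (e8 : n * (n * m) = 0)
    (e9 : n * a = u * n)
    (p β : V) (hp : u p = 0) (hd : d p = u β) : p ∈ LinearMap.range u := by
  have happ : ∀ (f g : Module.End F V) (v : V), (f * g) v = f (g v) := fun f g v => rfl
  -- ζ₁ := (m*n) p + n β
  have h1 : a ((m*n) p + n β) = 0 := by
    have t1 : a ((m*n) p) = (m*n) (u p) + n (d p) := by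
      have h := LinearMap.congr_fun e1 p
      simpa [happ, LinearMap.add_apply] using h
    have t2 : a (n β) = n (u β) := by
      have h := LinearMap.congr_fun e2 β
      simpa [happ] using h
    rw [map_add, t1, t2, hp, map_zero, zero_add, hd]
    exact hV2 _
  obtain ⟨ξ, hξ⟩ : ((m*n) p + n β) ∈ LinearMap.range a := by
    rw [← hker]; exact LinearMap.mem_ker.mpr h1
  have part1 : (m*n) p ∈ LinearMap.range u := by
    refine ⟨(m*n) ξ, ?_⟩
    have t3 : u ((m*n) ξ) = (m*n) (a ξ) := by
      have h := LinearMap.congr_fun e3 ξ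
      simpa [happ] using h.symm
    have t4 : (m*n) ((m*n) p) = (m*n) p := by
      have h := LinearMap.congr_fun e4 p
      simpa [happ] using h
    have t5 : (m*n) (n β) = 0 := by
      have h := LinearMap.congr_fun e5 β
      simpa [happ] using h
    rw [t3, hξ, map_add, t4, t5, add_zero]
  -- ζ₂ := m p + (n*m) β
  have h2 : a (m p + (n*m) β) = 0 := by
    have t1 : a (m p) = m (u p) + (n*m) (d p) := by
      have h := LinearMap.congr_fun e6 p
      simpa [happ, LinearMap.add_apply] using h
    have t2 : a ((n*m) β) = (n*m) (u β) := by
      have h := LinearMap.congr_fun e7 β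
      simpa [happ] using h
    rw [map_add, t1, t2, hp, map_zero, zero_add, hd]
    exact hV2 _
  obtain ⟨ξ', hξ'⟩ : (m p + (n*m) β) ∈ LinearMap.range a := by
    rw [← hker]; exact LinearMap.mem_ker.mpr h2
  have part2 : (n*m) p ∈ LinearMap.range u := by
    refine ⟨n ξ', ?_⟩
    have t3 : u (n ξ') = n (a ξ') := by
      have h := LinearMap.congr_fun e9 ξ'
      simpa [happ] using h.symm
    have t4 : n (m p) = (n*m) p := (happ n m p).symm
    have t5 : n ((n*m) β) = 0 := by
      have h := LinearMap.congr_fun e8 β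
      simpa [happ] using h
    rw [t3, hξ', map_add, t4, t5, add_zero]
  have hfin : p = (n*m) p + (m*n) p := by
    have h := LinearMap.congr_fun hnm p
    simpa [LinearMap.add_apply, happ] using h.symm
  rw [hfin]
  exact Submodule.add_mem _ part2 part1

end Key

section Restrict

open LinearMap Submodule Module

lemma s14_finrank_restrict {F V : Type*} [Field F] [AddCommGroup V] [Module F V]
    [FiniteDimensional F V] (g : V →ₗ[F] V) (S : Submodule F V) :
    finrank F S = finrank F (S.map g) + finrank F ↥(LinearMap.ker g ⊓ S) := by
  have h := LinearMap.finrank_range_add_finrank_ker (g.domRestrict S)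
  rw [LinearMap.range_domRestrict] at h
  rw [LinearMap.ker_domRestrict] at h
  have hcomap : Submodule.comap S.subtype (LinearMap.ker g)
      = Submodule.comap S.subtype (LinearMap.ker g ⊓ S) := by
    rw [Submodule.comap_inf, Submodule.comap_subtype_self, inf_top_eq]
  rw [hcomap] at h
  rw [(Submodule.comapSubtypeEquivOfLe (inf_le_right :
      LinearMap.ker g ⊓ S ≤ S)).finrank_eq] at h
  exact h.symm

lemma s14_half {F V : Type*} [Field F] [AddCommGroup V] [Module F V]
    [FiniteDimensional F V] (g : V →ₗ[F] V) (S : Submodule F V)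
    (h : LinearMap.ker g ⊓ S = S.map g) :
    finrank F S = 2 * finrank F (S.map g) := by
  rw [s14_finrank_restrict g S, h, two_mul]

end Restrict
set_option maxHeartbeats 1000000 in
theorem stmt_14 {F : Type*} [Field F] (hF : ringChar F = 2) {k : ℕ} (hk : Odd k) :
    ¬ ∃ x y : Matrix (Fin k ⊕ Fin k) (Fin k ⊕ Fin k) F,
        x * x = 1 ∧ y * y = 1 ∧ (x - 1).rank = k ∧ (y - 1).rank = k ∧
        x * Matrix.fromBlocks (1 : Matrix (Fin k) (Fin k) F) 0 1 1 =
          Matrix.fromBlocks (1 : Matrix (Fin k) (Fin k) F) 0 1 1 * x ∧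
        y * (Matrix.fromBlocks (1 : Matrix (Fin k) (Fin k) F) 0 1 1).transpose =
          (Matrix.fromBlocks (1 : Matrix (Fin k) (Fin k) F) 0 1 1).transpose * y ∧
        x * y = y * x := by
  rintro ⟨x, y, hx2, hy2, hxr, hyr, hxt, hyt, hxy⟩
  -- char 2 facts
  have hF2 : (2:F) = 0 := by
    have h := ringChar.Nat.cast_ringChar (R := F)
    rw [hF] at h
    exact_mod_cast h
  set t : Matrix (Fin k ⊕ Fin k) (Fin k ⊕ Fin k) F :=
    Matrix.fromBlocks (1 : Matrix (Fin k) (Fin k) F) 0 1 1 with ht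
  have hM2 : ∀ Z : Matrix (Fin k ⊕ Fin k) (Fin k ⊕ Fin k) F, Z + Z = 0 := by
    intro Z; ext i j
    rw [Matrix.add_apply, Matrix.zero_apply, ← two_mul, hF2, zero_mul]
  have h2M : (2 : Matrix (Fin k ⊕ Fin k) (Fin k ⊕ Fin k) F) = 0 := by
    rw [← one_add_one_eq_two]; exact hM2 1
  have hsub : ∀ Z W : Matrix (Fin k ⊕ Fin k) (Fin k ⊕ Fin k) F, Z - W = Z + W := by
    intro Z W
    rw [sub_eq_add_neg]
    congr 1
    exact neg_eq_of_add_eq_zero_left (hM2 W)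
  rw [hsub] at hxr hyr
  -- block matrices
  set NB : Matrix (Fin k ⊕ Fin k) (Fin k ⊕ Fin k) F :=
    Matrix.fromBlocks 0 0 (1 : Matrix (Fin k) (Fin k) F) 0 with hNB
  set MB : Matrix (Fin k ⊕ Fin k) (Fin k ⊕ Fin k) F :=
    Matrix.fromBlocks 0 (1 : Matrix (Fin k) (Fin k) F) 0 0 with hMB
  have h2mat : ((1 : Matrix (Fin k) (Fin k) F) + 1) = 0 := by
    ext i j
    rw [Matrix.add_apply, Matrix.zero_apply, ← two_mul, hF2, zero_mul]
  have htN : t + 1 = NB := by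
    rw [ht, hNB, ← Matrix.fromBlocks_one, Matrix.fromBlocks_add]
    congr 1 <;> simp [h2mat]
  have htM : t.transpose + 1 = MB := by
    rw [ht, hMB, Matrix.fromBlocks_transpose, ← Matrix.fromBlocks_one, Matrix.fromBlocks_add]
    congr 1 <;> simp [h2mat]
  have hN2m : NB * NB = 0 := by
    rw [hNB, Matrix.fromBlocks_multiply]
    simp [Matrix.fromBlocks_zero]
  have hM2m : MB * MB = 0 := by
    rw [hMB, Matrix.fromBlocks_multiply]
    simp [Matrix.fromBlocks_zero]
  have hNMm : NB * MB + MB * NB = 1 := by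
    rw [hNB, hMB, Matrix.fromBlocks_multiply, Matrix.fromBlocks_multiply,
      Matrix.fromBlocks_add, ← Matrix.fromBlocks_one]
    congr 1 <;> simp
  -- involution squares
  have hA2m : (x + 1) * (x + 1) = 0 := by
    linear_combination (norm := noncomm_ring) hx2 + (x+1) * h2M
  have hC2m : (y + 1) * (y + 1) = 0 := by
    linear_combination (norm := noncomm_ring) hy2 + (y+1) * h2M
  -- commutations
  have hANm : (x + 1) * NB = NB * (x + 1) := by
    rw [← htN]
    linear_combination (norm := noncomm_ring) hxt
  have hCMm : (y + 1) * MB = MB * (y + 1) := by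
    rw [← htM]
    linear_combination (norm := noncomm_ring) hyt
  have hACm : (x + 1) * (y + 1) = (y + 1) * (x + 1) := by
    linear_combination (norm := noncomm_ring) hxy
  -- transport to End
  set φ : Matrix (Fin k ⊕ Fin k) (Fin k ⊕ Fin k) F ≃ₐ[F]
      (((Fin k ⊕ Fin k) → F) →ₗ[F] ((Fin k ⊕ Fin k) → F)) := Matrix.toLinAlgEquiv' with hφ
  set aE : Module.End F ((Fin k ⊕ Fin k) → F) := φ (x + 1) with haE
  set cE : Module.End F ((Fin k ⊕ Fin k) → F) := φ (y + 1) with hcE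
  set nE : Module.End F ((Fin k ⊕ Fin k) → F) := φ NB with hnE
  set mE : Module.End F ((Fin k ⊕ Fin k) → F) := φ MB with hmE
  have hV2 : ∀ v : (Fin k ⊕ Fin k) → F, v + v = 0 := by
    intro v; funext i
    rw [Pi.add_apply, Pi.zero_apply, ← two_mul, hF2, zero_mul]
  have hE2 : (2 : Module.End F ((Fin k ⊕ Fin k) → F)) = 0 := by
    rw [← one_add_one_eq_two]
    apply LinearMap.ext; intro v
    simpa using hV2 v
  have hEadd : ∀ z : Module.End F ((Fin k ⊕ Fin k) → F), z + z = 0 := by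
    intro z; rw [← two_mul, hE2, zero_mul]
  have haa : aE * aE = 0 := by
    have h := congrArg φ hA2m; simpa only [map_mul, map_zero] using h
  have hcc : cE * cE = 0 := by
    have h := congrArg φ hC2m; simpa only [map_mul, map_zero] using h
  have hnn : nE * nE = 0 := by
    have h := congrArg φ hN2m; simpa only [map_mul, map_zero] using h
  have hmm : mE * mE = 0 := by
    have h := congrArg φ hM2m; simpa only [map_mul, map_zero] using h
  have han : aE * nE = nE * aE := by
    have h := congrArg φ hANm; simpa only [map_mul, map_zero] using h
  have hcm : cE * mE = mE * cE := by
    have h := congrArg φ hCMm; simpa only [map_mul, map_zero] using h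
  have hac : aE * cE = cE * aE := by
    have h := congrArg φ hACm; simpa only [map_mul, map_zero] using h
  have hnm : nE * mE + mE * nE = 1 := by
    have h := congrArg φ hNMm; simpa only [map_mul, map_add, map_one] using h
  have hnm' : mE * nE + nE * mE = 1 := by rw [add_comm]; exact hnm
  -- dimension bookkeeping
  have hdim : Module.finrank F ((Fin k ⊕ Fin k) → F) = k + k := by
    rw [Module.finrank_pi]; simp
  have haEfun : (aE : ((Fin k ⊕ Fin k) → F) →ₗ[F] ((Fin k ⊕ Fin k) → F))
      = (x + 1).mulVecLin := by
    apply LinearMap.ext; intro v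
    rw [haE, hφ, Matrix.toLinAlgEquiv'_apply, Matrix.mulVecLin_apply]
  have hcEfun : (cE : ((Fin k ⊕ Fin k) → F) →ₗ[F] ((Fin k ⊕ Fin k) → F))
      = (y + 1).mulVecLin := by
    apply LinearMap.ext; intro v
    rw [hcE, hφ, Matrix.toLinAlgEquiv'_apply, Matrix.mulVecLin_apply]
  have hrangeA : Module.finrank F (LinearMap.range aE) = k := by rw [haEfun]; exact hxr
  have hrangeC : Module.finrank F (LinearMap.range cE) = k := by rw [hcEfun]; exact hyr
  have hkerA : LinearMap.ker aE = LinearMap.range aE := by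
    have hle : LinearMap.range aE ≤ LinearMap.ker aE := by
      rintro v ⟨w, rfl⟩
      rw [LinearMap.mem_ker]
      have h := LinearMap.congr_fun haa w
      simpa using h
    have h1 := LinearMap.finrank_range_add_finrank_ker aE
    rw [hrangeA, hdim] at h1
    have hkA : Module.finrank F (LinearMap.ker aE) = k := by omega
    exact (Submodule.eq_of_le_of_finrank_le hle (by rw [hrangeA, hkA])).symm
  have hkerC : LinearMap.ker cE = LinearMap.range cE := by
    have hle : LinearMap.range cE ≤ LinearMap.ker cE := by
      rintro v ⟨w, rfl⟩
      rw [LinearMap.mem_ker]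
      have h := LinearMap.congr_fun hcc w
      simpa using h
    have h1 := LinearMap.finrank_range_add_finrank_ker cE
    rw [hrangeC, hdim] at h1
    have hkC : Module.finrank F (LinearMap.ker cE) = k := by omega
    exact (Submodule.eq_of_le_of_finrank_le hle (by rw [hrangeC, hkC])).symm
  -- derived operators and their identities
  have hDN := s14_I1 aE nE mE hE2 han hnm
  have hDM := s14_I2 aE nE mE hE2 hmm
  have hUN := s14_I10 aE nE mE hE2 han hnm
  have hUM := s14_I11 aE nE mE hE2 han hnm hmm
  have hNDN := s14_I17 aE nE mE hE2 han hnm hnn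
  have hUU := s14_I16 aE nE mE hE2 haa han hnm hnn
  have hNMN := s14_I20a nE mE hE2 hnm hnn
  have hDU := s14_I14 aE nE mE hE2 haa han hnm
  have hEM := s14_I1 cE mE nE hE2 hcm hnm'
  have hEN := s14_I2 cE mE nE hE2 hnn
  have hWM := s14_I10 cE mE nE hE2 hcm hnm'
  have hWN := s14_I11 cE mE nE hE2 hcm hnm' hnn
  have hMEM := s14_I17 cE mE nE hE2 hcm hnm' hmm
  have hWW := s14_I16 cE mE nE hE2 hcc hcm hnm' hmm
  have hMNM := s14_I20a mE nE hE2 hnm' hmm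
  have hEW := s14_I14 cE mE nE hE2 hcc hcm hnm'
  have hDW := s14_I15 aE cE nE mE hE2 han hnm hmm hcm hac
  have hDE := s14_I9 aE cE nE mE hE2 han hnm hcm hac
  have hUWWU := s14_I19 aE cE nE mE hE2 haa hcc hnn hmm han hcm hac hnm
  set D : Module.End F ((Fin k ⊕ Fin k) → F) := aE*mE + mE*aE with hD
  set E : Module.End F ((Fin k ⊕ Fin k) → F) := cE*nE + nE*cE with hE
  set U : Module.End F ((Fin k ⊕ Fin k) → F) := aE + nE*D with hU
  set W : Module.End F ((Fin k ⊕ Fin k) → F) := cE + mE*E with hW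
  -- defining equation for aE, cE (char 2)
  have hA1 : aE = U + nE*D := by rw [hU, add_assoc, hEadd, add_zero]
  have hC1 : cE = W + mE*E := by rw [hW, add_assoc, hEadd, add_zero]
  -- E-identities for (aE, U, D, nE, mE)
  have he1 := s14_E1 aE U D nE mE hE2 hA1 hUN hUM hDN hDM hNMN
  have he2 := s14_E2 aE U D nE mE hE2 hA1 hUN hNDN
  have he3 := s14_E3 aE U D nE mE hE2 hA1 hUN hUM hnn
  have he4 := s14_E4 aE U D nE mE hNMN
  have he5 := s14_E5 aE U D nE mE hnn
  have he6 := s14_E6 aE U D nE mE hA1 hUM hDM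
  have he7 := s14_E7 aE U D nE mE hA1 hUN hUM hNDN
  have he8 := s14_E8 aE U D nE mE hnn
  have he9 := s14_E9 aE U D nE mE hE2 hA1 hUN hnn
  -- E-identities for (cE, W, E, mE, nE)
  have hf1 := s14_E1 cE W E mE nE hE2 hC1 hWM hWN hEM hEN hMNM
  have hf2 := s14_E2 cE W E mE nE hE2 hC1 hWM hMEM
  have hf3 := s14_E3 cE W E mE nE hE2 hC1 hWM hWN hmm
  have hf4 := s14_E4 cE W E mE nE hMNM
  have hf5 := s14_E5 cE W E mE nE hmm
  have hf6 := s14_E6 cE W E mE nE hC1 hWN hEN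
  have hf7 := s14_E7 cE W E mE nE hC1 hWM hWN hMEM
  have hf8 := s14_E8 cE W E mE nE hmm
  have hf9 := s14_E9 cE W E mE nE hE2 hC1 hWM hmm
  -- Fitting decomposition for D
  have happly : ∀ (f g : Module.End F ((Fin k ⊕ Fin k) → F)) (v : (Fin k ⊕ Fin k) → F),
      (f*g) v = f (g v) := fun _ _ _ => rfl
  set r : ℕ := Module.finrank F ((Fin k ⊕ Fin k) → F) with hr
  set P : Module.End F ((Fin k ⊕ Fin k) → F) := D ^ r with hP
  have hstab : ∀ j, r ≤ j → LinearMap.ker (D ^ j) = LinearMap.ker P := by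
    intro j hj
    rw [hP, hr]
    exact Module.End.ker_pow_eq_ker_pow_finrank_of_le hj
  set Z0 : Submodule F ((Fin k ⊕ Fin k) → F) := LinearMap.ker P with hZ0
  set Z1 : Submodule F ((Fin k ⊕ Fin k) → F) := LinearMap.range P with hZ1
  have hcommP : ∀ g : Module.End F ((Fin k ⊕ Fin k) → F), D * g = g * D → P * g = g * P := by
    intro g hg
    rw [hP]
    exact Commute.pow_left hg r
  have hZ0inv : ∀ (g : Module.End F ((Fin k ⊕ Fin k) → F)), D*g = g*D →
      ∀ v, v ∈ Z0 → g v ∈ Z0 := by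
    intro g hg v hv
    rw [hZ0, LinearMap.mem_ker] at hv ⊢
    have h : P (g v) = g (P v) := by
      have h := LinearMap.congr_fun (hcommP g hg) v
      simpa [happly] using h
    rw [h, hv, map_zero]
  have hZ1inv : ∀ (g : Module.End F ((Fin k ⊕ Fin k) → F)), D*g = g*D →
      ∀ v, v ∈ Z1 → g v ∈ Z1 := by
    intro g hg v hv
    obtain ⟨w, rfl⟩ := hv
    refine ⟨g w, ?_⟩
    have h := LinearMap.congr_fun (hcommP g hg) w
    simpa [happly] using h
  have hstab2 : LinearMap.ker (P*P) = Z0 := by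
    rw [hP, ← pow_add, hZ0]
    exact hstab (r + r) (Nat.le_add_right r r)
  have hdisj : Z0 ⊓ Z1 = ⊥ := by
    rw [eq_bot_iff]
    intro v hv
    obtain ⟨hv0, w, rfl⟩ := Submodule.mem_inf.mp hv
    have hw : w ∈ LinearMap.ker (P*P) := by
      rw [LinearMap.mem_ker, happly]
      exact LinearMap.mem_ker.mp hv0
    rw [hstab2, hZ0, LinearMap.mem_ker] at hw
    simp [hw]
  have hrn := LinearMap.finrank_range_add_finrank_ker P
  rw [← hZ1, ← hZ0, ← hr] at hrn
  have hsup : Z0 ⊔ Z1 = ⊤ := by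
    apply Submodule.eq_top_of_finrank_eq
    have h2 := Submodule.finrank_sup_add_finrank_inf_eq Z0 Z1
    rw [hdisj, finrank_bot, add_zero] at h2
    rw [h2]
    omega
  have hDsurj : LinearMap.range (D ^ (r+1)) = Z1 := by
    apply Submodule.eq_of_le_of_finrank_le
    · rintro v ⟨w, rfl⟩
      refine ⟨D w, ?_⟩
      rw [hP]
      calc (D^r) (D w) = (D^r * D) w := rfl
        _ = (D^(r+1)) w := by rw [← pow_succ]
    · have h1 := LinearMap.finrank_range_add_finrank_ker (D^(r+1))
      have h2 : LinearMap.ker (D^(r+1)) = Z0 := by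
        rw [hZ0]; exact hstab (r+1) (Nat.le_succ r)
      rw [h2, ← hr] at h1
      omega
  -- Z0 half: ker U ⊓ Z0 = map U Z0
  have hUZ0 : LinearMap.ker U ⊓ Z0 = Z0.map U := by
    apply le_antisymm
    · intro p hp
      obtain ⟨hpU, hpZ0⟩ := Submodule.mem_inf.mp hp
      rw [LinearMap.mem_ker] at hpU
      have haux : ∀ j, (D^j) p ∈ LinearMap.range U → p ∈ LinearMap.range U := by
        intro j
        induction j with
        | zero => intro hj; simpa using hj
        | succ i ih =>
          intro hj
          apply ih
          obtain ⟨β, hβ⟩ := hj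
          refine s14_key aE U D nE mE hV2 hkerA hnm he1 he2 he3 he4 he5 he6 he7 he8 he9
            ((D^i) p) β ?_ ?_
          · have h := LinearMap.congr_fun (Commute.pow_left hDU i) p
            have h' : U ((D^i) p) = (D^i) (U p) := by simpa [happly] using h.symm
            rw [h', hpU, map_zero]
          · have hps : D ((D^i) p) = (D^(i+1)) p := by
              calc D ((D^i) p) = (D * D^i) p := rfl
                _ = (D^(i+1)) p := by rw [← pow_succ']
            rw [hps]
            exact hβ.symm
      have hPz : (D^r) p = 0 := by
        rw [hZ0, LinearMap.mem_ker, hP] at hpZ0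
        exact hpZ0
      have hp_range : p ∈ LinearMap.range U := haux r (by rw [hPz]; exact zero_mem _)
      obtain ⟨q, hq⟩ := hp_range
      have hqsup : q ∈ Z0 ⊔ Z1 := by rw [hsup]; exact Submodule.mem_top
      obtain ⟨q0, hq0, q1, hq1, hqsum⟩ := Submodule.mem_sup.mp hqsup
      have hUq1Z1 : U q1 ∈ Z1 := hZ1inv U hDU q1 hq1
      have hUq0Z0 : U q0 ∈ Z0 := hZ0inv U hDU q0 hq0
      have hpsum : p = U q0 + U q1 := by rw [← map_add, hqsum, hq]
      have hUq1 : U q1 = 0 := by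
        have hmem : U q1 ∈ Z0 ⊓ Z1 := by
          refine Submodule.mem_inf.mpr ⟨?_, hUq1Z1⟩
          have : U q1 = p - U q0 := by rw [hpsum]; abel
          rw [this]
          exact Submodule.sub_mem _ hpZ0 hUq0Z0
        rw [hdisj] at hmem
        exact hmem
      refine Submodule.mem_map.mpr ⟨q0, hq0, ?_⟩
      rw [hpsum, hUq1, add_zero]
    · rintro v ⟨z, hz, rfl⟩
      refine Submodule.mem_inf.mpr ⟨?_, hZ0inv U hDU z hz⟩
      rw [LinearMap.mem_ker]
      have h := LinearMap.congr_fun hUU z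
      simpa [happly] using h
  -- Z1 half: ker W ⊓ Z1 = map W Z1
  have hWZ1 : LinearMap.ker W ⊓ Z1 = Z1.map W := by
    apply le_antisymm
    · intro p hp
      obtain ⟨hpW, hpZ1⟩ := Submodule.mem_inf.mp hp
      rw [LinearMap.mem_ker] at hpW
      have hWDp : W (D p) = 0 := by
        have h := LinearMap.congr_fun hDW p
        have h' : W (D p) = D (W p) := by simpa [happly] using h.symm
        rw [h', hpW, map_zero]
      have hEDp : E (D p) = W (U p) := by
        have h1 : E * D = U*W + W*U := by rw [← hDE, ← hUWWU]
        have h := LinearMap.congr_fun h1 p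
        simp only [LinearMap.add_apply, happly] at h
        rw [hpW, map_zero, zero_add] at h
        exact h
      obtain ⟨α, hα⟩ := s14_key cE W E mE nE hV2 hkerC hnm' hf1 hf2 hf3 hf4 hf5 hf6 hf7 hf8 hf9
        (D p) (U p) hWDp hEDp
      have hαsup : α ∈ Z0 ⊔ Z1 := by rw [hsup]; exact Submodule.mem_top
      obtain ⟨α0, hα0, α1, hα1, hαsum⟩ := Submodule.mem_sup.mp hαsup
      have hWα1Z1 : W α1 ∈ Z1 := hZ1inv W hDW α1 hα1
      have hWα0Z0 : W α0 ∈ Z0 := hZ0inv W hDW α0 hα0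
      have hDpZ1 : D p ∈ Z1 := hZ1inv D rfl p hpZ1
      have hDsum : D p = W α0 + W α1 := by rw [← map_add, hαsum, hα]
      have hWα0 : W α0 = 0 := by
        have hmem : W α0 ∈ Z0 ⊓ Z1 := by
          refine Submodule.mem_inf.mpr ⟨hWα0Z0, ?_⟩
          have : W α0 = D p - W α1 := by rw [hDsum]; abel
          rw [this]
          exact Submodule.sub_mem _ hDpZ1 hWα1Z1
        rw [hdisj] at hmem
        exact hmem
      have hDp1 : D p = W α1 := by rw [hDsum, hWα0, zero_add]
      have hα1r : α1 ∈ LinearMap.range (D^(r+1)) := by rw [hDsurj]; exact hα1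
      obtain ⟨γ, hγ⟩ := hα1r
      have hζZ1 : (D^r) γ ∈ Z1 := ⟨γ, by rw [hP]⟩
      have hα1ζ : α1 = D ((D^r) γ) := by
        rw [← hγ]
        calc (D^(r+1)) γ = (D * D^r) γ := by rw [pow_succ']
          _ = D ((D^r) γ) := rfl
      have hkerD : LinearMap.ker D ≤ Z0 := by
        intro v hv
        rw [hZ0, hP, hr]
        have h := Module.End.ker_pow_le_ker_pow_finrank D 1
        rw [pow_one] at h
        exact h hv
      have hfinal : p - W ((D^r) γ) ∈ Z0 ⊓ Z1 := by
        refine Submodule.mem_inf.mpr ⟨?_, ?_⟩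
        · apply hkerD
          rw [LinearMap.mem_ker, map_sub]
          have hDWζ : D (W ((D^r) γ)) = W (D ((D^r) γ)) := by
            have h := LinearMap.congr_fun hDW ((D^r) γ)
            simpa [happly] using h
          rw [hDWζ, ← hα1ζ, hDp1, sub_self]
        · exact Submodule.sub_mem _ hpZ1 (hZ1inv W hDW _ hζZ1)
      rw [hdisj] at hfinal
      have hpW' : p = W ((D^r) γ) := by
        have h := (Submodule.mem_bot _).mp hfinal
        exact sub_eq_zero.mp h
      exact Submodule.mem_map.mpr ⟨(D^r) γ, hζZ1, hpW'.symm⟩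
    · rintro v ⟨z, hz, rfl⟩
      refine Submodule.mem_inf.mpr ⟨?_, hZ1inv W hDW z hz⟩
      rw [LinearMap.mem_ker]
      have h := LinearMap.congr_fun hWW z
      simpa [happly] using h
  -- halving with nE on N,M-invariant submodules
  have hShalf : ∀ S : Submodule F ((Fin k ⊕ Fin k) → F),
      (∀ v ∈ S, nE v ∈ S) → (∀ v ∈ S, mE v ∈ S) →
      LinearMap.ker nE ⊓ S = S.map nE := by
    intro S hSn hSm
    apply le_antisymm
    · intro p hp
      obtain ⟨hpn, hpS⟩ := Submodule.mem_inf.mp hp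
      rw [LinearMap.mem_ker] at hpn
      refine Submodule.mem_map.mpr ⟨mE p, hSm p hpS, ?_⟩
      have h := LinearMap.congr_fun hnm p
      simp only [LinearMap.add_apply, Module.End.one_apply, happly] at h
      rw [hpn, map_zero, add_zero] at h
      exact h
    · rintro v ⟨z, hz, rfl⟩
      refine Submodule.mem_inf.mpr ⟨?_, hSn z hz⟩
      rw [LinearMap.mem_ker]
      have h := LinearMap.congr_fun hnn z
      simpa [happly] using h
  have hS0n : ∀ v ∈ Z0.map U, nE v ∈ Z0.map U := by
    rintro v ⟨z, hz, rfl⟩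
    refine Submodule.mem_map.mpr ⟨nE z, hZ0inv nE hDN z hz, ?_⟩
    have h := LinearMap.congr_fun hUN z
    simpa [happly] using h
  have hS0m : ∀ v ∈ Z0.map U, mE v ∈ Z0.map U := by
    rintro v ⟨z, hz, rfl⟩
    refine Submodule.mem_map.mpr ⟨mE z, hZ0inv mE hDM z hz, ?_⟩
    have h := LinearMap.congr_fun hUM z
    simpa [happly] using h
  have hS1n : ∀ v ∈ Z1.map W, nE v ∈ Z1.map W := by
    rintro v ⟨z, hz, rfl⟩
    refine Submodule.mem_map.mpr ⟨nE z, hZ1inv nE hDN z hz, ?_⟩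
    have h := LinearMap.congr_fun hWN z
    simpa [happly] using h
  have hS1m : ∀ v ∈ Z1.map W, mE v ∈ Z1.map W := by
    rintro v ⟨z, hz, rfl⟩
    refine Submodule.mem_map.mpr ⟨mE z, hZ1inv mE hDM z hz, ?_⟩
    have h := LinearMap.congr_fun hWM z
    simpa [happly] using h
  -- counting
  have c0 : Module.finrank F Z0 = 2 * Module.finrank F (Z0.map U) := s14_half U Z0 hUZ0
  have c1 : Module.finrank F Z1 = 2 * Module.finrank F (Z1.map W) := s14_half W Z1 hWZ1
  have c0' : Module.finrank F (Z0.map U) = 2 * Module.finrank F ((Z0.map U).map nE) :=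
    s14_half nE _ (hShalf _ hS0n hS0m)
  have c1' : Module.finrank F (Z1.map W) = 2 * Module.finrank F ((Z1.map W).map nE) :=
    s14_half nE _ (hShalf _ hS1n hS1m)
  obtain ⟨j, hjj⟩ := hk
  omega
end

section
/- Let F be a finite field with q elements and characteristic different from 2. The number of x ∈ GL_4(F) with x² = 1 and rank(x - 1) = 1 equals q³(q² + 1)(q + 1). -/
/-!
If `x² = 1` and `x - 1` has rank one, then `A = 1 - x` has rank one and satisfies `A² = 2A`;
writing `A = v wᵀ`, the second condition says `v ⬝ w = 2`. There are `(q⁴ - 1) q³` pairs `(v, w)`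
with `v ⬝ w = 2` (`v ≠ 0` is arbitrary and `w` ranges over an affine hyperplane), and each `A`
comes from exactly the `q - 1` pairs `(c v, c⁻¹ w)` with `c ∈ Fˣ`. The count is therefore
`(q⁴ - 1) q³ / (q - 1) = q³ (q² + 1) (q + 1)`.
-/

open Matrix Module

theorem Nat.card_eq_card_mul_of_card_fiber {α β : Type*} [Finite α] [Finite β] (f : α → β)
    {k : ℕ} (h : ∀ b, Nat.card {a // f a = b} = k) : Nat.card α = Nat.card β * k := by
  have := Fintype.ofFinite β
  rw [← Nat.card_congr (Equiv.sigmaFiberEquiv f), Nat.card_sigma]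
  simp only [h, Finset.sum_const, Finset.card_univ, smul_eq_mul, Nat.card_eq_fintype_card]

theorem Module.Dual.card_preimage_singleton {K V : Type*} [Field K] [Finite K] [AddCommGroup V]
    [Module K V] [FiniteDimensional K V] {f : Module.Dual K V} (hf : f ≠ 0) (c : K) :
    Nat.card (f ⁻¹' {c}) = Nat.card K ^ (finrank K V - 1) := by
  have hker := finrank_ker_add_one_of_ne_zero hf
  calc Nat.card (f ⁻¹' {c})
      = Nat.card (LinearMap.ker f) :=
        Nat.card_congr (AddMonoidHom.fiberEquivKerOfSurjective (f := f.toAddMonoidHom)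
          (LinearMap.surjective hf) c)
    _ = Nat.card K ^ (finrank K V - 1) := by
        rw [Module.natCard_eq_pow_finrank (K := K), ← hker, Nat.add_sub_cancel]

namespace Matrix

theorem rank_neg {R m n : Type*} [CommRing R] [Fintype n] (A : Matrix m n R) :
    (-A).rank = A.rank := by
  rw [rank, rank, show (-A).mulVecLin = -A.mulVecLin from LinearMap.ext fun x => neg_mulVec x A,
    LinearMap.range_neg]

theorem mul_self_eq_one_and_rank_sub_one_iff {R n : Type*} [CommRing R] [Fintype n]
    [DecidableEq n] {x : Matrix n n R} {r : ℕ} :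
    x * x = 1 ∧ (x - 1).rank = r ↔ (1 - x) * (1 - x) = (2 : R) • (1 - x) ∧ (1 - x).rank = r := by
  have hsq : (1 - x) * (1 - x) - (2 : R) • (1 - x) = x * x - 1 := by
    rw [two_smul]; noncomm_ring
  rw [← sub_eq_zero (a := (1 - x) * (1 - x)), hsq, sub_eq_zero, ← rank_neg (1 - x), neg_sub]

variable {K m n : Type*} [Field K]

theorem vecMulVec_mul_self [Fintype n] (v w : n → K) :
    vecMulVec v w * vecMulVec v w = (v ⬝ᵥ w) • vecMulVec v w := by
  rw [vecMulVec_mul_vecMulVec, vecMulVec_smul, dotProduct_comm]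

theorem rank_vecMulVec_of_ne_zero [Fintype n] {v : m → K} {w : n → K} (hv : v ≠ 0) (hw : w ≠ 0) :
    (vecMulVec v w).rank = 1 := by
  obtain ⟨j, hj⟩ : ∃ j, w j ≠ 0 := Function.ne_iff.mp hw
  have hcol : ∀ j, (vecMulVec v w).col j = w j • v := fun j => by
    ext i; simp [vecMulVec_apply, mul_comm]
  have hspan : Submodule.span K (Set.range (vecMulVec v w).col) = K ∙ v := by
    apply le_antisymm
    · rw [Submodule.span_le]
      rintro _ ⟨j, rfl⟩
      exact hcol j ▸ Submodule.smul_mem _ _ (Submodule.mem_span_singleton_self v)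
    · rw [Submodule.span_singleton_le_iff_mem]
      have hmem : (w j)⁻¹ • (vecMulVec v w).col j ∈
          Submodule.span K (Set.range (vecMulVec v w).col) :=
        Submodule.smul_mem _ _ (Submodule.subset_span ⟨j, rfl⟩)
      rwa [hcol, inv_smul_smul₀ hj] at hmem
  rw [rank_eq_finrank_span_cols, hspan, finrank_span_singleton hv]

theorem exists_eq_vecMulVec_of_rank_eq_one [Fintype n] {A : Matrix m n K} (h : A.rank = 1) :
    ∃ v w, A = vecMulVec v w := by
  rw [rank_eq_finrank_span_cols, finrank_eq_one_iff'] at h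
  obtain ⟨u, -, hu⟩ := h
  choose c hc using fun j => hu ⟨A.col j, Submodule.subset_span ⟨j, rfl⟩⟩
  refine ⟨u, c, ?_⟩
  ext i j
  have := congrFun (congrArg Subtype.val (hc j)) i
  simp only [SetLike.val_smul, Pi.smul_apply, smul_eq_mul, col_apply] at this
  rw [vecMulVec_apply, ← this, mul_comm]

theorem exists_smul_of_vecMulVec_eq {v v' : m → K} {w w' : n → K} (hv : v ≠ 0) (hw : w ≠ 0)
    (h : vecMulVec v' w' = vecMulVec v w) :
    ∃ c : K, c ≠ 0 ∧ v' = c • v ∧ w' = c⁻¹ • w := by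
  have hentry : ∀ i j, v' i * w' j = v i * w j := fun i j => by
    simpa [vecMulVec_apply] using congrFun (congrFun h i) j
  obtain ⟨i, hi⟩ : ∃ i, v i ≠ 0 := Function.ne_iff.mp hv
  obtain ⟨j, hj⟩ : ∃ j, w j ≠ 0 := Function.ne_iff.mp hw
  have hvi : v' i ≠ 0 := fun h0 => mul_ne_zero hi hj (by rw [← hentry, h0, zero_mul])
  have hwj : w' j ≠ 0 := fun h0 => mul_ne_zero hi hj (by rw [← hentry, h0, mul_zero])
  refine ⟨v' i / v i, div_ne_zero hvi hi, funext fun k => ?_, funext fun k => ?_⟩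
  · simp only [Pi.smul_apply, smul_eq_mul]
    field_simp
    refine mul_right_cancel₀ hwj ?_
    linear_combination v i * hentry k j - v k * hentry i j
  · simp only [Pi.smul_apply, smul_eq_mul]
    field_simp
    linear_combination hentry i k

theorem card_vecMulVec_fiber [Fintype K] {v : m → K} {w : n → K} (hv : v ≠ 0) (hw : w ≠ 0) :
    Nat.card {p : (m → K) × (n → K) // vecMulVec p.1 p.2 = vecMulVec v w} = Nat.card Kˣ := by
  have hscale (c : Kˣ) : vecMulVec ((c : K) • v) ((c : K)⁻¹ • w) = vecMulVec v w := by
    rw [smul_vecMulVec, vecMulVec_smul, smul_smul, mul_inv_cancel₀ c.ne_zero, one_smul]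
  refine (Nat.card_congr (Equiv.ofBijective
    (fun c => ⟨((c : K) • v, (c : K)⁻¹ • w), hscale c⟩) ⟨?_, ?_⟩)).symm
  · intro c c' h
    exact Units.ext (smul_left_injective K hv (congrArg (fun p => p.1.1) h))
  · rintro ⟨⟨v', w'⟩, h⟩
    obtain ⟨c, hc, rfl, rfl⟩ := exists_smul_of_vecMulVec_eq hv hw h
    exact ⟨Units.mk0 c hc, rfl⟩

theorem card_dotProduct_eq [Fintype K] [Fintype n] [DecidableEq n] {c : K} (hc : c ≠ 0) :
    Nat.card {p : (n → K) × (n → K) // p.1 ⬝ᵥ p.2 = c} =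
      (Nat.card K ^ Fintype.card n - 1) * Nat.card K ^ (Fintype.card n - 1) := by
  classical
  let e : {p : (n → K) × (n → K) // p.1 ⬝ᵥ p.2 = c} ≃
      Σ v : {v : n → K // v ≠ 0}, dotProductEquiv K n v.1 ⁻¹' {c} :=
    { toFun p := ⟨⟨p.1.1, by rintro h; apply hc; rw [← p.2, h, zero_dotProduct]⟩, ⟨p.1.2, p.2⟩⟩
      invFun q := ⟨(q.1.1, q.2.1), q.2.2⟩ }
  have hfiber (v : {v : n → K // v ≠ 0}) :
      Nat.card (dotProductEquiv K n v.1 ⁻¹' {c}) = Nat.card K ^ (Fintype.card n - 1) := by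
    rw [Module.Dual.card_preimage_singleton ((dotProductEquiv K n).map_ne_zero_iff.mpr v.2),
      Module.finrank_fintype_fun_eq_card]
  rw [Nat.card_congr e, Nat.card_sigma, Finset.sum_congr rfl fun v _ => hfiber v,
    Finset.sum_const, Finset.card_univ, Fintype.card_subtype_compl, Fintype.card_subtype_eq,
    Fintype.card_fun, smul_eq_mul, Nat.card_eq_fintype_card]

theorem card_rank_eq_one_mul_self_eq_smul [Fintype K] [Fintype n] [DecidableEq n] {c : K}
    (hc : c ≠ 0) :
    Nat.card {A : Matrix n n K // A * A = c • A ∧ A.rank = 1} * (Nat.card K - 1) =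
      (Nat.card K ^ Fintype.card n - 1) * Nat.card K ^ (Fintype.card n - 1) := by
  have hne {p : (n → K) × (n → K)} (hp : p.1 ⬝ᵥ p.2 = c) : p.1 ≠ 0 ∧ p.2 ≠ 0 := by
    refine ⟨?_, ?_⟩ <;> rintro h <;> apply hc <;> simp [← hp, h]
  let μ (p : {p : (n → K) × (n → K) // p.1 ⬝ᵥ p.2 = c}) :
      {A : Matrix n n K // A * A = c • A ∧ A.rank = 1} :=
    ⟨vecMulVec p.1.1 p.1.2, by rw [vecMulVec_mul_self, p.2],
      rank_vecMulVec_of_ne_zero (hne p.2).1 (hne p.2).2⟩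
  rw [← card_dotProduct_eq hc, ← Nat.card_units]
  refine (Nat.card_eq_card_mul_of_card_fiber μ fun A => ?_).symm
  obtain ⟨A, hsq, hrank⟩ := A
  obtain ⟨v, w, rfl⟩ := exists_eq_vecMulVec_of_rank_eq_one hrank
  have hA : vecMulVec v w ≠ 0 := by rintro h; simp [h] at hrank
  obtain ⟨hv, hw⟩ := not_or.mp (vecMulVec_eq_zero.not.mp hA)
  have hdot {p : (n → K) × (n → K)} (hp : vecMulVec p.1 p.2 = vecMulVec v w) :
      p.1 ⬝ᵥ p.2 = c := by
    have := vecMulVec_mul_self p.1 p.2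
    rw [hp, hsq] at this
    exact (smul_left_injective K hA this).symm
  rw [← card_vecMulVec_fiber hv hw]
  exact Nat.card_congr ((Equiv.subtypeEquivRight fun p => Subtype.ext_iff).trans
    (Equiv.subtypeSubtypeEquivSubtype hdot))

end Matrix

theorem stmt_15_general {F : Type*} [Field F] [Fintype F]
    (hF : ringChar F ≠ 2) :
    Nat.card {x : Matrix (Fin 4) (Fin 4) F // x * x = 1 ∧ (x - 1).rank = 1} =
      (Fintype.card F) ^ 3 * ((Fintype.card F) ^ 2 + 1) * (Fintype.card F + 1) := by
  have hcount := card_rank_eq_one_mul_self_eq_smul (n := Fin 4) (Ring.two_ne_zero hF)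
  rw [← Nat.card_congr (Equiv.subtypeEquiv (Equiv.subLeft 1)
    fun x => mul_self_eq_one_and_rank_sub_one_iff), Fintype.card_fin,
    Nat.card_eq_fintype_card (α := F)] at hcount
  have hq : 1 ≤ Fintype.card F := Fintype.card_pos
  refine Nat.eq_of_mul_eq_mul_right (Nat.sub_pos_of_lt Fintype.one_lt_card) (hcount.trans ?_)
  zify [hq, Nat.one_le_pow 4 _ hq]
  ring

theorem stmt_15 {F : Type*} [Field F] [Fintype F] [DecidableEq F]
    (hF : ringChar F ≠ 2) :
    Nat.card {x : Matrix (Fin 4) (Fin 4) F // x * x = 1 ∧ (x - 1).rank = 1} =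
      (Fintype.card F) ^ 3 * ((Fintype.card F) ^ 2 + 1) * (Fintype.card F + 1) :=
  stmt_15_general hF
end

section
/- Let F be a finite field with q elements and characteristic 2. The number of x ∈ GL_4(F) with x² = 1 and rank(x - 1) = 2 equals q(q⁴ - 1)(q³ - 1). -/
open LinearMap Module Submodule Function

section Aux

variable {F : Type*} [Field F] [Fintype F] [DecidableEq F]

private lemma card_eq_of_fiber_card_eq {α β γ : Type*} [Finite α] [Finite β] [Finite γ]
    (f : α → γ) (g : β → γ)
    (h : ∀ c, Nat.card {a // f a = c} = Nat.card {b // g b = c}) :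
    Nat.card α = Nat.card β := by
  classical
  cases nonempty_fintype γ
  rw [← Nat.card_congr (Equiv.sigmaFiberEquiv f), ← Nat.card_congr (Equiv.sigmaFiberEquiv g)]
  letI : ∀ c, Fintype {a // f a = c} := fun c => Fintype.ofFinite _
  letI : ∀ c, Fintype {b // g b = c} := fun c => Fintype.ofFinite _
  rw [Nat.card_eq_fintype_card, Nat.card_eq_fintype_card, Fintype.card_sigma, Fintype.card_sigma]
  refine Finset.sum_congr rfl fun c _ => ?_
  have := h c
  rwa [Nat.card_eq_fintype_card, Nat.card_eq_fintype_card] at this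

private lemma iffA1 (W : Submodule F (Fin 4 → F)) (hW : finrank F W = 2)
    (f : (Fin 4 → F) →ₗ[F] (Fin 4 → F)) :
    ((f ∘ₗ f = 0 ∧ finrank F (LinearMap.range f) = 2) ∧ LinearMap.range f = W) ↔
      (LinearMap.range f = W ∧ W ≤ LinearMap.ker f) := by
  constructor
  · rintro ⟨⟨h0, -⟩, rfl⟩
    refine ⟨rfl, ?_⟩
    rintro _ ⟨x, rfl⟩
    have := DFunLike.congr_fun h0 x
    simpa [LinearMap.mem_ker] using this
  · rintro ⟨rfl, hker⟩
    refine ⟨⟨LinearMap.ext fun x => ?_, hW⟩, rfl⟩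
    simpa using hker (LinearMap.mem_range_self f x)

private def equivA2 (W : Submodule F (Fin 4 → F)) :
    {f : (Fin 4 → F) →ₗ[F] (Fin 4 → F) // LinearMap.range f = W ∧ W ≤ LinearMap.ker f} ≃
      {h : ((Fin 4 → F) ⧸ W) →ₗ[F] W // Surjective h} where
  toFun := fun ⟨f, hf⟩ => ⟨LinearMap.codRestrict W (W.liftQ f hf.2) (fun q => by
      obtain ⟨x, rfl⟩ := W.mkQ_surjective q
      simpa using hf.1 ▸ LinearMap.mem_range_self f x), by
    rintro ⟨w, hw⟩
    rw [← hf.1] at hw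
    obtain ⟨x, hx⟩ := hw
    exact ⟨W.mkQ x, Subtype.ext (by simpa using hx)⟩⟩
  invFun := fun ⟨h, hh⟩ => ⟨W.subtype ∘ₗ (h ∘ₗ W.mkQ), by
    constructor
    · apply le_antisymm
      · rintro _ ⟨x, rfl⟩
        exact (h (W.mkQ x)).2
      · intro w hw
        obtain ⟨q, hq⟩ := hh ⟨w, hw⟩
        obtain ⟨x, rfl⟩ := W.mkQ_surjective q
        exact ⟨x, by simpa using congrArg Subtype.val hq⟩
    · intro x hx
      have h0 : W.mkQ x = 0 := by
        simpa [Submodule.mkQ_apply] using (Submodule.Quotient.mk_eq_zero W).2 hx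
      simp [LinearMap.mem_ker, h0]⟩
  left_inv := fun ⟨f, hf⟩ => Subtype.ext (LinearMap.ext fun x => by simp)
  right_inv := fun ⟨h, hh⟩ => Subtype.ext (LinearMap.ext fun q => by
    obtain ⟨x, rfl⟩ := W.mkQ_surjective q
    exact Subtype.ext (by simp))

private noncomputable def equivA3 (W : Submodule F (Fin 4 → F)) (hW : finrank F W = 2) :
    {h : ((Fin 4 → F) ⧸ W) →ₗ[F] W // Surjective h} ≃
      {w : Fin 2 → W // LinearIndependent F w} := by
  have hQ : finrank F ((Fin 4 → F) ⧸ W) = 2 := by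
    have h1 := W.finrank_quotient_add_finrank
    have h2 : finrank F (Fin 4 → F) = 4 := by
      simp [Module.finrank_fintype_fun_eq_card]
    omega
  let b : Basis (Fin 2) F ((Fin 4 → F) ⧸ W) := finBasisOfFinrankEq F _ hQ
  exact
    { toFun := fun ⟨h, hh⟩ => ⟨fun i => h (b i), by
        have : LinearMap.ker h = ⊥ := by
          rw [ker_eq_bot_iff_range_eq_top_of_finrank_eq_finrank (by rw [hQ, hW])]
          exact LinearMap.range_eq_top.2 hh
        exact b.linearIndependent.map' h this⟩
      invFun := fun ⟨w, hw⟩ => ⟨b.constr F w, by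
        rw [← LinearMap.range_eq_top, Basis.constr_range]
        apply Submodule.eq_top_of_finrank_eq
        rw [finrank_span_eq_card hw, Fintype.card_fin, hW]⟩
      left_inv := fun ⟨h, hh⟩ => Subtype.ext (b.constr_self F h)
      right_inv := fun ⟨w, hw⟩ => Subtype.ext (funext fun i => b.constr_basis F w i) }

private def equivA4 (W : Submodule F (Fin 4 → F)) (hW : finrank F W = 2) :
    {w : Fin 2 → W // LinearIndependent F w} ≃
      {v : Fin 2 → (Fin 4 → F) //
        LinearIndependent F v ∧ span F (Set.range v) = W} where
  toFun := fun ⟨w, hw⟩ => ⟨fun i => (w i : Fin 4 → F), hw.map' W.subtype W.ker_subtype, by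
    apply Submodule.eq_of_le_of_finrank_eq
    · rw [span_le]
      rintro _ ⟨i, rfl⟩
      exact (w i).2
    · have h := hw.map' W.subtype W.ker_subtype
      rw [show (Set.range fun i => ((w i : Fin 4 → F))) = Set.range (⇑W.subtype ∘ w) from rfl,
        finrank_span_eq_card h, Fintype.card_fin, hW]⟩
  invFun := fun ⟨v, hv⟩ => ⟨fun i => ⟨v i, hv.2 ▸ subset_span ⟨i, rfl⟩⟩, by
    apply LinearIndependent.of_comp W.subtype
    exact hv.1⟩
  left_inv := fun ⟨w, hw⟩ => Subtype.ext (funext fun i => Subtype.ext rfl)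
  right_inv := fun ⟨v, hv⟩ => Subtype.ext (funext fun i => rfl)

private lemma fiber_card (W : Submodule F (Fin 4 → F)) :
    Nat.card {f : (Fin 4 → F) →ₗ[F] (Fin 4 → F) //
        (f ∘ₗ f = 0 ∧ finrank F (LinearMap.range f) = 2) ∧ LinearMap.range f = W} =
      Nat.card {v : Fin 2 → (Fin 4 → F) //
        LinearIndependent F v ∧ span F (Set.range v) = W} := by
  by_cases hW : finrank F W = 2
  · exact Nat.card_congr ((Equiv.subtypeEquivRight (iffA1 W hW)).trans
      ((equivA2 W).trans ((equivA3 W hW).trans (equivA4 W hW))))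
  · have h1 : IsEmpty {f : (Fin 4 → F) →ₗ[F] (Fin 4 → F) //
        (f ∘ₗ f = 0 ∧ finrank F (LinearMap.range f) = 2) ∧ LinearMap.range f = W} :=
      ⟨fun ⟨f, hf⟩ => hW (hf.2 ▸ hf.1.2)⟩
    have h2 : IsEmpty {v : Fin 2 → (Fin 4 → F) //
        LinearIndependent F v ∧ span F (Set.range v) = W} :=
      ⟨fun ⟨v, hv⟩ => hW (by rw [← hv.2, finrank_span_eq_card hv.1, Fintype.card_fin])⟩
    rw [Nat.card_of_isEmpty, Nat.card_of_isEmpty]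

private lemma card_S :
    Nat.card {f : (Fin 4 → F) →ₗ[F] (Fin 4 → F) //
        f ∘ₗ f = 0 ∧ finrank F (LinearMap.range f) = 2} =
      Nat.card {v : Fin 2 → (Fin 4 → F) // LinearIndependent F v} := by
  haveI : Finite ((Fin 4 → F) →ₗ[F] (Fin 4 → F)) :=
    Finite.of_injective (fun f => (f : (Fin 4 → F) → (Fin 4 → F))) DFunLike.coe_injective
  haveI : Finite (Submodule F (Fin 4 → F)) :=
    Finite.of_injective (fun W => (W : Set (Fin 4 → F))) SetLike.coe_injective
  apply card_eq_of_fiber_card_eq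
    (fun s => LinearMap.range s.1) (fun v => span F (Set.range v.1))
  intro W
  rw [Nat.card_congr (Equiv.subtypeSubtypeEquivSubtypeInter
      (fun f : (Fin 4 → F) →ₗ[F] (Fin 4 → F) =>
        f ∘ₗ f = 0 ∧ finrank F (LinearMap.range f) = 2)
      (fun f => LinearMap.range f = W)),
    Nat.card_congr (Equiv.subtypeSubtypeEquivSubtypeInter
      (fun v : Fin 2 → (Fin 4 → F) => LinearIndependent F v)
      (fun v => span F (Set.range v) = W))]
  exact fiber_card W

end Aux

theorem stmt_16 {F : Type*} [Field F] [Fintype F] [DecidableEq F]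
    (hF : ringChar F = 2) :
    Nat.card {x : Matrix (Fin 4) (Fin 4) F // x * x = 1 ∧ (x - 1).rank = 2} =
      (Fintype.card F) * ((Fintype.card F) ^ 4 - 1) * ((Fintype.card F) ^ 3 - 1) := by
  classical
  haveI : CharP F 2 := ringChar.of_eq hF
  have h1 : (1 : Matrix (Fin 4) (Fin 4) F) + 1 = 0 := by
    have : ((1 : F) + 1) = 0 := by
      have := CharP.cast_eq_zero F 2
      push_cast at this
      linear_combination this
    calc (1 : Matrix (Fin 4) (Fin 4) F) + 1 = ((1 : F) + 1) • 1 := by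
          rw [add_smul, one_smul]
      _ = 0 := by rw [this, zero_smul]
  have key : ∀ x : Matrix (Fin 4) (Fin 4) F, (x - 1) * (x - 1) = x * x - 1 := by
    intro x
    have hx : x + x = 0 := by
      calc x + x = ((1 : Matrix (Fin 4) (Fin 4) F) + 1) * x := by rw [add_mul, one_mul]
        _ = 0 := by rw [h1, zero_mul]
    have hneg : -(1 : Matrix (Fin 4) (Fin 4) F) = 1 := neg_eq_of_add_eq_zero_left h1
    calc (x - 1) * (x - 1) = x * x - (x + x) + 1 := by noncomm_ring
      _ = x * x + 1 := by rw [hx, sub_zero]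
      _ = x * x - 1 := by rw [sub_eq_add_neg, hneg]
  have e1 : {x : Matrix (Fin 4) (Fin 4) F // x * x = 1 ∧ (x - 1).rank = 2} ≃
      {N : Matrix (Fin 4) (Fin 4) F // N * N = 0 ∧ N.rank = 2} :=
    Equiv.subtypeEquiv (Equiv.subRight 1) (fun x => by
      simp only [Equiv.subRight_apply]
      rw [key x, sub_eq_zero])
  have e2 : {N : Matrix (Fin 4) (Fin 4) F // N * N = 0 ∧ N.rank = 2} ≃
      {f : (Fin 4 → F) →ₗ[F] (Fin 4 → F) //
        f ∘ₗ f = 0 ∧ finrank F (LinearMap.range f) = 2} :=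
    Equiv.subtypeEquiv (Matrix.toLin' : Matrix (Fin 4) (Fin 4) F ≃ₗ[F] _).toEquiv (fun N => by
      constructor
      · rintro ⟨hmul, hrank⟩
        refine ⟨?_, ?_⟩
        · rw [LinearEquiv.coe_toEquiv, ← Matrix.toLin'_mul, hmul, map_zero]
        · rw [LinearEquiv.coe_toEquiv, Matrix.toLin'_apply']
          exact hrank
      · rintro ⟨hmul, hrank⟩
        refine ⟨?_, ?_⟩
        · have : Matrix.toLin' (N * N) = 0 := by
            rw [Matrix.toLin'_mul]
            exact hmul
          exact (LinearEquiv.map_eq_zero_iff _).1 this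
        · rw [Matrix.rank]
          rw [LinearEquiv.coe_toEquiv, Matrix.toLin'_apply'] at hrank
          exact hrank)
  rw [Nat.card_congr (e1.trans e2), card_S,
    card_linearIndependent (K := F) (V := Fin 4 → F) (k := 2)
      (by simp [Module.finrank_fintype_fun_eq_card])]
  have hfr : finrank F (Fin 4 → F) = 4 := by
    simp [Module.finrank_fintype_fun_eq_card]
  rw [hfr]
  rw [Fin.prod_univ_two]
  simp only [Fin.val_zero, Fin.val_one, Fin.isValue, pow_zero, pow_one]
  set q := Fintype.card F with hq
  have hsub : q ^ 4 - q = q * (q ^ 3 - 1) := by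
    rw [Nat.mul_sub, mul_one, ← pow_succ']
  rw [hsub]
  ring
end

section
/- Let F be a finite field with q elements and characteristic different from 2, and let t = diag(1, 1, -1, -1) ∈ GL_4(F). The number of involutions x ∈ GL_4(F) with x ≠ t, rank(x - 1) = 2, and image(x - 1) = image(t - 1) equals q⁴ - 1. Each such x has the block form [[I_2, 0],[A, -I_2]] for a unique 2×2 matrix A ≠ 0. -/
/-!
An involution `x` acts as `-1` on the range of `x - 1`, because `x (x - 1) = -(x - 1)`. If that
range is the `(-1)`-eigenspace `{w | w₁ = w₂ = 0}` of `t`, then the first two rows of `x - 1`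
vanish and `x` is `-1` on the last two coordinates, so `x = [[1, 0], [A, -1]]`. Conversely every
such matrix is an involution, and `x - 1 = [[0, 0], [A, -2]]` has exactly that range once `2` is
invertible; `A ≠ 0` is `x ≠ t`. Counting the nonzero `A` gives `q⁴ - 1`.
-/

section

open Matrix

theorem card_matrix_ne_zero {R m n : Type*} [Zero R] [Fintype R] [Fintype m] [Fintype n] :
    Nat.card {A : Matrix m n R // A ≠ 0} =
      Fintype.card R ^ (Fintype.card m * Fintype.card n) - 1 := by
  classical
  rw [Nat.card_eq_fintype_card, Fintype.card_subtype_compl, Fintype.card_subtype_eq]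
  change Fintype.card (m → n → R) - 1 = _
  rw [Fintype.card_fun, Fintype.card_fun, ← pow_mul, mul_comm]

variable {R m n : Type*} [CommRing R]

def inrSubspace (R m n : Type*) [CommRing R] : Submodule R (m ⊕ n → R) :=
  LinearMap.ker (LinearMap.funLeft R R (Sum.inl : m → m ⊕ n))

theorem mem_inrSubspace {w : m ⊕ n → R} : w ∈ inrSubspace R m n ↔ ∀ i, w (Sum.inl i) = 0 := by
  simp [inrSubspace, funext_iff, LinearMap.funLeft_apply]

theorem finrank_inrSubspace [Fintype m] [Fintype n] {K : Type*} [Field K] :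
    Module.finrank K (inrSubspace K m n) = Fintype.card n := by
  have hsurj :=
    LinearMap.funLeft_surjective_of_injective K K _ (Sum.inl_injective (α := m) (β := n))
  have h := LinearMap.finrank_range_add_finrank_ker (LinearMap.funLeft K K (Sum.inl : m → m ⊕ n))
  rw [LinearMap.range_eq_top.mpr hsurj, finrank_top] at h
  simp only [Module.finrank_pi, Fintype.card_sum] at h
  exact (Nat.add_left_cancel h :)

theorem range_mulVecLin_fromBlocks_zero_zero [Fintype m] [Fintype n] [DecidableEq n]
    (C : Matrix n m R) {D : Matrix n n R} (hD : IsUnit D) :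
    LinearMap.range (fromBlocks (0 : Matrix m m R) 0 C D).mulVecLin = inrSubspace R m n := by
  apply le_antisymm
  · rintro _ ⟨v, rfl⟩
    simp [mem_inrSubspace, fromBlocks_mulVec]
  · intro w hw
    obtain ⟨E, hDE⟩ := hD.exists_right_inv
    refine ⟨Sum.elim 0 (E *ᵥ (w ∘ Sum.inr)), funext fun j => ?_⟩
    cases j with
    | inl i => simp [fromBlocks_mulVec, mem_inrSubspace.mp hw i]
    | inr i => simp [fromBlocks_mulVec, mulVec_mulVec, hDE]

theorem mulVec_eq_neg_of_mem_range_sub_one [Fintype n] [DecidableEq n] {x : Matrix n n R}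
    (hx : x * x = 1) {w : n → R} (hw : w ∈ LinearMap.range (x - 1).mulVecLin) : x *ᵥ w = -w := by
  obtain ⟨v, rfl⟩ := hw
  have : x * (x - 1) = -(x - 1) := by rw [mul_sub, hx, mul_one, neg_sub]
  simp only [mulVecLin_apply, mulVec_mulVec, this, neg_mulVec]

theorem fromBlocks_one_zero_neg_one_mul_self [Fintype m] [Fintype n] [DecidableEq m]
    [DecidableEq n] (A : Matrix n m R) :
    fromBlocks 1 0 A (-1) * fromBlocks 1 0 A (-1) = (1 : Matrix (m ⊕ n) (m ⊕ n) R) := by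
  simp [fromBlocks_multiply, fromBlocks_one]

theorem fromBlocks_one_zero_neg_one_sub_one [DecidableEq m] [DecidableEq n] (A : Matrix n m R) :
    fromBlocks 1 0 A (-1) - 1 = (fromBlocks 0 0 A (-1 - 1) : Matrix (m ⊕ n) (m ⊕ n) R) := by
  rw [← fromBlocks_one, sub_eq_add_neg, fromBlocks_neg, fromBlocks_add]
  simp [sub_eq_add_neg]

theorem fromBlocks_one_zero_neg_one_injective [DecidableEq m] [DecidableEq n] :
    Function.Injective fun A : Matrix n m R =>
      (fromBlocks 1 0 A (-1) : Matrix (m ⊕ n) (m ⊕ n) R) :=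
  fun _ _ h => (fromBlocks_inj.mp h).2.2.1

theorem eq_fromBlocks_of_range_sub_one_eq [Fintype m] [Fintype n] [DecidableEq m]
    [DecidableEq n] {x : Matrix (m ⊕ n) (m ⊕ n) R} (hx : x * x = 1)
    (hrange : LinearMap.range (x - 1).mulVecLin = inrSubspace R m n) :
    x = fromBlocks 1 0 x.toBlocks₂₁ (-1) := by
  have htop (i : m) (j : m ⊕ n) : (x - 1) (Sum.inl i) j = 0 := by
    have : (x - 1) *ᵥ Pi.single j 1 ∈ inrSubspace R m n := hrange ▸ ⟨Pi.single j 1, rfl⟩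
    simpa using mem_inrSubspace.mp this i
  have hright (j : n) : x *ᵥ Pi.single (Sum.inr j) 1 = -Pi.single (Sum.inr j) 1 :=
    mulVec_eq_neg_of_mem_range_sub_one hx (hrange ▸ mem_inrSubspace.mpr fun i => by simp)
  conv_lhs => rw [← fromBlocks_toBlocks x]
  rw [fromBlocks_inj]
  refine ⟨?_, ?_, rfl, ?_⟩ <;> ext i j
  · simpa [toBlocks₁₁, sub_eq_zero, one_apply] using htop i (Sum.inl j)
  · simpa [toBlocks₁₂, sub_eq_zero] using htop i (Sum.inr j)
  · simpa [toBlocks₂₂, one_apply, Pi.single_apply, eq_comm] using congrFun (hright j) (Sum.inr i)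

theorem isUnit_neg_one_sub_one [Fintype n] [DecidableEq n] (h2 : IsUnit (2 : R)) :
    IsUnit ((-1 : Matrix n n R) - 1) := by
  have : (-1 : Matrix n n R) - 1 = scalar n (-2 : R) := by
    rw [map_neg, map_ofNat]; norm_num
  rw [this]
  exact h2.neg.map _

theorem mul_self_eq_one_and_range_sub_one_eq_iff [Fintype m] [Fintype n] [DecidableEq m]
    [DecidableEq n] (h2 : IsUnit (2 : R)) {x : Matrix (m ⊕ n) (m ⊕ n) R} :
    x * x = 1 ∧ LinearMap.range (x - 1).mulVecLin = inrSubspace R m n ↔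
      ∃ A, fromBlocks 1 0 A (-1) = x := by
  constructor
  · rintro ⟨hx, hrange⟩
    exact ⟨_, (eq_fromBlocks_of_range_sub_one_eq hx hrange).symm⟩
  · rintro ⟨A, rfl⟩
    refine ⟨fromBlocks_one_zero_neg_one_mul_self A, ?_⟩
    rw [fromBlocks_one_zero_neg_one_sub_one]
    exact range_mulVecLin_fromBlocks_zero_zero A (isUnit_neg_one_sub_one h2)



theorem mem_range_fromBlocks_ne_zero_iff {K : Type*} [Field K] [Fintype m] [Fintype n]
    [DecidableEq m] [DecidableEq n] (h2 : (2 : K) ≠ 0) {x : Matrix (m ⊕ n) (m ⊕ n) K} :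
    (x ∈ Set.range fun A : {A : Matrix n m K // A ≠ 0} => fromBlocks 1 0 A.1 (-1)) ↔
      x * x = 1 ∧ x ≠ fromBlocks 1 0 0 (-1) ∧ (x - 1).rank = Fintype.card n ∧
        LinearMap.range (x - 1).mulVecLin = inrSubspace K m n := by
  constructor
  · rintro ⟨⟨A, hA⟩, rfl⟩
    obtain ⟨hx, hrange⟩ := (mul_self_eq_one_and_range_sub_one_eq_iff h2.isUnit).mpr ⟨A, rfl⟩
    refine ⟨hx, fun h => hA (fromBlocks_one_zero_neg_one_injective h), ?_, hrange⟩
    rw [rank, hrange, finrank_inrSubspace]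
  · rintro ⟨hx, hne, -, hrange⟩
    obtain ⟨A, rfl⟩ := (mul_self_eq_one_and_range_sub_one_eq_iff h2.isUnit).mp ⟨hx, hrange⟩
    exact ⟨⟨A, by rintro rfl; exact hne rfl⟩, rfl⟩

end

theorem stmt_17_general {F : Type*} [Field F] [Fintype F]
    (hF : ringChar F ≠ 2) :
    Nat.card {x : Matrix (Fin 2 ⊕ Fin 2) (Fin 2 ⊕ Fin 2) F //
        x * x = 1 ∧ x ≠ Matrix.fromBlocks 1 0 0 (-1) ∧ (x - 1).rank = 2 ∧
        LinearMap.range (x - 1).mulVecLin =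
          LinearMap.range ((Matrix.fromBlocks (1 : Matrix (Fin 2) (Fin 2) F) 0 0
            (-1 : Matrix (Fin 2) (Fin 2) F)) - 1).mulVecLin} =
      (Fintype.card F) ^ 4 - 1 ∧
    ∀ x : Matrix (Fin 2 ⊕ Fin 2) (Fin 2 ⊕ Fin 2) F,
      x * x = 1 → x ≠ Matrix.fromBlocks 1 0 0 (-1) → (x - 1).rank = 2 →
      LinearMap.range (x - 1).mulVecLin =
        LinearMap.range ((Matrix.fromBlocks (1 : Matrix (Fin 2) (Fin 2) F) 0 0
          (-1 : Matrix (Fin 2) (Fin 2) F)) - 1).mulVecLin →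
      ∃! A : Matrix (Fin 2) (Fin 2) F, A ≠ 0 ∧ x = Matrix.fromBlocks 1 0 A (-1) := by
  have h2 : (2 : F) ≠ 0 := Ring.two_ne_zero hF
  rw [((mul_self_eq_one_and_range_sub_one_eq_iff h2.isUnit).mpr ⟨0, rfl⟩).2]
  have key (x : Matrix (Fin 2 ⊕ Fin 2) (Fin 2 ⊕ Fin 2) F) :
      (x * x = 1 ∧ x ≠ Matrix.fromBlocks 1 0 0 (-1) ∧ (x - 1).rank = 2 ∧
        LinearMap.range (x - 1).mulVecLin = inrSubspace F (Fin 2) (Fin 2)) ↔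
      x ∈ Set.range fun A : {A : Matrix (Fin 2) (Fin 2) F // A ≠ 0} =>
        Matrix.fromBlocks 1 0 A.1 (-1) := by
    rw [mem_range_fromBlocks_ne_zero_iff h2, Fintype.card_fin]
  constructor
  · rw [Nat.card_congr (Equiv.subtypeEquivRight key), Nat.card_range_of_injective
      fun _ _ h => Subtype.ext (fromBlocks_one_zero_neg_one_injective h), card_matrix_ne_zero]
    simp
  · intro x hx hne hrank hrange
    obtain ⟨⟨A, hA⟩, rfl⟩ := (key x).mp ⟨hx, hne, hrank, hrange⟩
    exact ⟨A, ⟨hA, rfl⟩, fun B hB => (fromBlocks_one_zero_neg_one_injective hB.2).symm⟩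

theorem stmt_17 {F : Type*} [Field F] [Fintype F] [DecidableEq F]
    (hF : ringChar F ≠ 2) :
    Nat.card {x : Matrix (Fin 2 ⊕ Fin 2) (Fin 2 ⊕ Fin 2) F //
        x * x = 1 ∧ x ≠ Matrix.fromBlocks 1 0 0 (-1) ∧ (x - 1).rank = 2 ∧
        LinearMap.range (x - 1).mulVecLin =
          LinearMap.range ((Matrix.fromBlocks (1 : Matrix (Fin 2) (Fin 2) F) 0 0
            (-1 : Matrix (Fin 2) (Fin 2) F)) - 1).mulVecLin} =
      (Fintype.card F) ^ 4 - 1 ∧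
    ∀ x : Matrix (Fin 2 ⊕ Fin 2) (Fin 2 ⊕ Fin 2) F,
      x * x = 1 → x ≠ Matrix.fromBlocks 1 0 0 (-1) → (x - 1).rank = 2 →
      LinearMap.range (x - 1).mulVecLin =
        LinearMap.range ((Matrix.fromBlocks (1 : Matrix (Fin 2) (Fin 2) F) 0 0
          (-1 : Matrix (Fin 2) (Fin 2) F)) - 1).mulVecLin →
      ∃! A : Matrix (Fin 2) (Fin 2) F, A ≠ 0 ∧ x = Matrix.fromBlocks 1 0 A (-1) :=
  stmt_17_general hF
end
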